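/- arXiv:2507.06401 — 5 statements merged into one kernel-verified Lean document; each statement's English description precedes it below -/
import Mathlib

section
/- Let f : G̃ → G be a harmonic morphism of graphs with G connected. Then the quantity Σ_{ṽ ∈ f⁻¹(v)} d_f(ṽ) is independent of the choice of vertex v ∈ V(G); moreover this common value (the global degree deg(f)) also equals Σ_{h̃ ∈ f⁻¹(h)} d_f(h̃) for every half-edge h of G, and equals Σ_{ẽ ∈ f⁻¹(e)} d_f(ẽ) for every edge e of G. -/
open scoped Classical

structure HGraph where
  V : Type
  H : Type
  [fintV : Fintype V]
  [fintH : Fintype H]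
  [decV : DecidableEq V]
  [decH : DecidableEq H]
  root : H → V
  inv : H → H
  inv_inv : ∀ h, inv (inv h) = h
  inv_ne : ∀ h, inv h ≠ h

attribute [instance] HGraph.fintV HGraph.fintH HGraph.decV HGraph.decH

namespace HGraph

variable (G : HGraph)

/-- The setoid on half-edges whose classes are the edges. -/
def edgeSetoid : Setoid G.H where
  r h h' := h' = h ∨ h' = G.inv h
  iseqv := by
    refine ⟨fun h => Or.inl rfl, ?_, ?_⟩
    · rintro a b (rfl | rfl)
      · exact Or.inl rfl
      · exact Or.inr (G.inv_inv a).symm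
    · rintro a b c (rfl | rfl) hbc
      · exact hbc
      · rcases hbc with rfl | rfl
        · exact Or.inr rfl
        · exact Or.inl (G.inv_inv a)

instance edgeDec : DecidableRel G.edgeSetoid.r := fun _ _ => instDecidableOr

/-- The edges of a graph: orbits of the involution on half-edges. -/
def Edge := Quotient G.edgeSetoid

instance : Fintype G.Edge := @Quotient.fintype _ _ G.edgeSetoid G.edgeDec
instance : DecidableEq G.Edge := @Quotient.decidableEq _ G.edgeSetoid G.edgeDec

/-- The edge underlying a half-edge. -/
def edge (h : G.H) : G.Edge := Quotient.mk G.edgeSetoid h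

lemma edge_inv (h : G.H) : G.edge (G.inv h) = G.edge h :=
  Quotient.sound (Or.inr (G.inv_inv h).symm)

/-- The valence of a vertex: the number of half-edges rooted at it. -/
def val (v : G.V) : ℕ := (Finset.univ.filter fun h => G.root h = v).card

/-- Two vertices are adjacent through an edge belonging to `S`. -/
def adjOn (S : Finset G.Edge) (v w : G.V) : Prop :=
  ∃ h, G.edge h ∈ S ∧ G.root h = v ∧ G.root (G.inv h) = w

/-- The spanning subgraph with edge set `S` is connected. -/
def ConnectedOn (S : Finset G.Edge) : Prop :=
  ∀ v w : G.V, Relation.ReflTransGen (G.adjOn S) v w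

/-- The graph is connected. -/
def Connected : Prop := Nonempty G.V ∧ G.ConnectedOn Finset.univ

/-- Euler characteristic of a vertex, for a genus function `gV`. -/
def chiZ (gV : G.V → ℤ) (v : G.V) : ℤ := 2 - 2 * gV v - G.val v

/-- The genus of a (connected) weighted graph. -/
def genusZ (gV : G.V → ℤ) : ℤ :=
  (Fintype.card G.Edge : ℤ) - Fintype.card G.V + 1 + ∑ v, gV v

/-- The number of connected components of the spanning subgraph with edge set `S`. -/
noncomputable def ncomp (S : Finset G.Edge) : ℕ :=
  Nat.card (Quotient (Relation.EqvGen.setoid (G.adjOn S)))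

end HGraph

/-- A harmonic morphism of graphs: a graph morphism together with local degrees. -/
structure HarmonicTo (Gt G : HGraph) where
  fV : Gt.V → G.V
  fH : Gt.H → G.H
  root_comm : ∀ h, G.root (fH h) = fV (Gt.root h)
  inv_comm : ∀ h, fH (Gt.inv h) = G.inv (fH h)
  dV : Gt.V → ℕ
  dH : Gt.H → ℕ
  dV_pos : ∀ v, 0 < dV v
  dH_pos : ∀ h, 0 < dH h
  dH_inv : ∀ h, dH (Gt.inv h) = dH h
  harm : ∀ (w : Gt.V) (h : G.H), G.root h = fV w →
    dV w = ∑ x ∈ Finset.univ.filter (fun x => Gt.root x = w ∧ fH x = h), dH x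

namespace HarmonicTo

variable {Gt G : HGraph} (f : HarmonicTo Gt G)

/-- The induced map on edges. -/
def fE : Gt.Edge → G.Edge :=
  Quotient.lift (fun h => G.edge (f.fH h)) (by
    rintro a b (rfl | rfl)
    · rfl
    · show G.edge (f.fH a) = G.edge (f.fH (Gt.inv a))
      rw [f.inv_comm]
      exact (G.edge_inv _).symm)

/-- The local degree of an edge. -/
def dE : Gt.Edge → ℕ :=
  Quotient.lift f.dH (by
    rintro a b (rfl | rfl)
    · rfl
    · exact (f.dH_inv a).symm)

/-- The ramification degree at a vertex of the source. -/
def Ram (gVt : Gt.V → ℤ) (gV : G.V → ℤ) (w : Gt.V) : ℤ :=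
  (f.dV w : ℤ) * G.chiZ gV (f.fV w) - Gt.chiZ gVt w

end HarmonicTo

/-!
Harmonicity at a vertex `w` over `v = f w` says that, for every half-edge `h` at `v`, the
half-edges of `G̃` over `h` rooted at `w` carry total degree `d_f(w)`; summing over `w`, the degree
of the fibre over `h` equals the degree of the fibre over its root. Since `f` commutes with the
involutions, the fibres over `h` and `ι h` have the same degree, so the vertex-fibre degree agrees
at the two ends of every edge and is constant on a connected graph. Over an edge `{h, ι h}`, each
preimage edge contains exactly one half-edge over `h`, because `ι` has no fixed points.
-/

open Finset

namespace HGraph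

variable (G : HGraph)

theorem inv_involutive : Function.Involutive G.inv := G.inv_inv

theorem edge_surjective : Function.Surjective G.edge := Quotient.mk_surjective

variable {G}

theorem edge_eq_edge_iff {h h' : G.H} : G.edge h = G.edge h' ↔ h' = h ∨ h' = G.inv h :=
  Quotient.eq

theorem ConnectedOn.apply_eq {α : Type*} {S : Finset G.Edge} (hS : G.ConnectedOn S)
    {φ : G.V → α} (hφ : ∀ v w, G.adjOn S v w → φ v = φ w) (v w : G.V) : φ v = φ w := by
  induction hS v w with
  | refl => rfl
  | tail _ hadj ih => exact ih.trans (hφ _ _ hadj)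

end HGraph

namespace HarmonicTo

variable {Gt G : HGraph} (f : HarmonicTo Gt G)

def vertexFiberDeg (v : G.V) : ℕ := ∑ w ∈ univ.filter (fun w => f.fV w = v), f.dV w

def halfEdgeFiberDeg (h : G.H) : ℕ := ∑ x ∈ univ.filter (fun x => f.fH x = h), f.dH x

def edgeFiberDeg (e : G.Edge) : ℕ := ∑ a ∈ univ.filter (fun a => f.fE a = e), f.dE a

theorem fE_edge (x : Gt.H) : f.fE (Gt.edge x) = G.edge (f.fH x) := rfl

theorem dE_edge (x : Gt.H) : f.dE (Gt.edge x) = f.dH x := rfl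

theorem halfEdgeFiberDeg_eq_vertexFiberDeg_root (h : G.H) :
    f.halfEdgeFiberDeg h = f.vertexFiberDeg (G.root h) := by
  have hroot : ∀ x ∈ univ.filter (fun x => f.fH x = h),
      Gt.root x ∈ univ.filter (fun w => f.fV w = G.root h) := by
    intro x hx
    simp only [mem_filter, mem_univ, true_and] at hx ⊢
    rw [← f.root_comm, hx]
  rw [halfEdgeFiberDeg, vertexFiberDeg, ← sum_fiberwise_of_maps_to hroot]
  refine sum_congr rfl fun w hw => ?_
  rw [f.harm w h (mem_filter.1 hw).2.symm, filter_filter]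
  simp only [and_comm]

theorem halfEdgeFiberDeg_inv (h : G.H) : f.halfEdgeFiberDeg (G.inv h) = f.halfEdgeFiberDeg h := by
  refine sum_equiv (Gt.inv_involutive.toPerm _) (fun x => ?_) fun x _ => (f.dH_inv x).symm
  simp only [mem_filter, mem_univ, true_and, Function.Involutive.coe_toPerm, f.inv_comm,
    G.inv_involutive.eq_iff]

theorem vertexFiberDeg_root_inv (h : G.H) :
    f.vertexFiberDeg (G.root (G.inv h)) = f.vertexFiberDeg (G.root h) := by
  rw [← halfEdgeFiberDeg_eq_vertexFiberDeg_root, ← halfEdgeFiberDeg_eq_vertexFiberDeg_root,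
    halfEdgeFiberDeg_inv]

theorem vertexFiberDeg_eq_of_connectedOn {S : Finset G.Edge} (hS : G.ConnectedOn S)
    (v w : G.V) : f.vertexFiberDeg v = f.vertexFiberDeg w := by
  refine hS.apply_eq (fun v w hadj => ?_) v w
  obtain ⟨h, -, rfl, rfl⟩ := hadj
  exact (f.vertexFiberDeg_root_inv h).symm

theorem edge_injOn_fiber (h : G.H) : Set.InjOn Gt.edge {x | f.fH x = h} := by
  intro x hx y hy hxy
  rcases HGraph.edge_eq_edge_iff.1 hxy with rfl | rfl
  · rfl
  · rw [Set.mem_ofPred_eq, f.inv_comm, hx] at hy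
    exact absurd hy (G.inv_ne h)

theorem edge_surjOn_fiber (h : G.H) :
    Set.SurjOn Gt.edge {x | f.fH x = h} {a | f.fE a = G.edge h} := by
  intro a ha
  obtain ⟨x, rfl⟩ := Gt.edge_surjective a
  rcases HGraph.edge_eq_edge_iff.1 (ha : G.edge (f.fH x) = G.edge h) with rfl | rfl
  · exact ⟨x, rfl, rfl⟩
  · exact ⟨Gt.inv x, f.inv_comm x, Gt.edge_inv x⟩

theorem edgeFiberDeg_edge (h : G.H) : f.edgeFiberDeg (G.edge h) = f.halfEdgeFiberDeg h := by
  refine (sum_nbij Gt.edge (fun x hx => ?_) ?_ ?_ fun x _ => f.dE_edge x).symm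
  · simp only [mem_filter, mem_univ, true_and] at hx ⊢
    rw [fE_edge, hx]
  · simpa only [coe_filter, mem_univ, true_and] using f.edge_injOn_fiber h
  · simpa only [coe_filter, mem_univ, true_and] using f.edge_surjOn_fiber h

end HarmonicTo

/-- For a harmonic morphism `f : G̃ → G` with `G` connected, the sum of the
local degrees over the preimages of a vertex is independent of the vertex; this common value,
the global degree, also equals the sum of the local degrees over the preimages of any half-edge
and over the preimages of any edge of `G`. -/
theorem globalDegree_welldefined (Gt G : HGraph) (f : HarmonicTo Gt G) (hconn : G.Connected) :
    ∃ D : ℕ,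
      (∀ v : G.V, ∑ w ∈ Finset.univ.filter (fun w => f.fV w = v), f.dV w = D) ∧
      (∀ h : G.H, ∑ x ∈ Finset.univ.filter (fun x => f.fH x = h), f.dH x = D) ∧
      (∀ e : G.Edge, ∑ a ∈ Finset.univ.filter (fun a => f.fE a = e), f.dE a = D) := by
  obtain ⟨⟨v₀⟩, hconn⟩ := hconn
  have hV : ∀ v, f.vertexFiberDeg v = f.vertexFiberDeg v₀ :=
    fun v => f.vertexFiberDeg_eq_of_connectedOn hconn v v₀
  have hH : ∀ h, f.halfEdgeFiberDeg h = f.vertexFiberDeg v₀ :=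
    fun h => (f.halfEdgeFiberDeg_eq_vertexFiberDeg_root h).trans (hV _)
  refine ⟨f.vertexFiberDeg v₀, hV, hH, fun e => ?_⟩
  obtain ⟨h, rfl⟩ := G.edge_surjective e
  exact (f.edgeFiberDeg_edge h).trans (hH h)
end

section
/- Let f : G̃ → G be a harmonic morphism of weighted graphs with G connected, let F ⊆ E(G), and let F̃ = f⁻¹(F). Then the contracted morphism f_F : G̃_{F̃} → G_F, defined by sending each contracted vertex ṽ_{ij} (corresponding to a component G̃_{ij} of the subgraph of G̃ spanned by F̃) to the contracted vertex v_i corresponding to the component G_i = f(G̃_{ij}) of the subgraph spanned by F, is a harmonic morphism of the same global degree as f, where the local degree of f_F at ṽ_{ij} is the global degree of the restriction of f to G̃_{ij} → G_i and all other local degrees are unchanged. Moreover, if f is effective then f_F is effective, and if f is unramified then f_F is unramified. -/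
/-! For a vertex `c` of the contraction of `G̃` (a component of the subgraph spanned by `f⁻¹(F)`)
and a vertex `v` of `G`, let `N(c, v)` (`componentDegreeAt`) be the sum of the local degrees of
`f` over the vertices of `c` above `v`. By harmonicity, `N(c, v)` is also the sum of the local
degrees of the half-edges in `c` above any half-edge rooted at `v`. For an edge of `F`, the
involution matches the half-edges in `c` above its two ends, so `N(c, ·)` is constant on the
components of the subgraph spanned by `F`: it is the local degree of `f_F` at `c`, and the
harmonicity and global degree of `f_F` follow by regrouping the corresponding sums for `f`.

Euler characteristics add up under contraction, `χ(c) = ∑_{v ∈ c} χ(v)`, because contracting an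
edge removes two half-edges and raises the genus by one. Together with the constancy of `N(c, ·)`
this gives `Ram_{f_F}(c) = ∑_{w ∈ c} Ram_f(w)`, whence effectiveness and unramifiedness pass to
`f_F`. -/

open scoped Classical

namespace HGraph

/-- The setoid on vertices generated by adjacency through edges in `F`; its classes are the
connected components of the subgraph spanned by `F` (together with untouched vertices as
singleton classes). -/
def contractSetoid (G : HGraph) (F : Finset G.Edge) : Setoid G.V :=
  Relation.EqvGen.setoid (G.adjOn F)

/-- The contraction of a graph along a set of edges `F`: each connected component of the
subgraph spanned by `F` is contracted to a single vertex, and the edges in `F` are removed. -/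
noncomputable def contract (G : HGraph) (F : Finset G.Edge) : HGraph where
  V := Quotient (G.contractSetoid F)
  H := {h : G.H // G.edge h ∉ F}
  fintV := Fintype.ofFinite _
  decV := Classical.decEq _
  root h := Quotient.mk (G.contractSetoid F) (G.root h.1)
  inv h := ⟨G.inv h.1, by rw [G.edge_inv]; exact h.2⟩
  inv_inv h := Subtype.ext (G.inv_inv h.1)
  inv_ne h := fun hh => G.inv_ne h.1 (congrArg Subtype.val hh)

/-- The genus function on the contraction: the genus of a contracted vertex is the genus of the
corresponding connected component of the subgraph spanned by `F` (for an uncontracted vertex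
this is just its original genus). -/
noncomputable def contractGenus (G : HGraph) (F : Finset G.Edge) (gV : G.V → ℕ)
    (c : (G.contract F).V) : ℤ :=
  (Nat.card {e : G.Edge // e ∈ F ∧
      Quotient.mk (G.contractSetoid F) (G.root (Quotient.out e)) = c} : ℤ)
    - Nat.card {v : G.V // Quotient.mk (G.contractSetoid F) v = c} + 1
    + ∑ᶠ (v : G.V) (_ : Quotient.mk (G.contractSetoid F) v = c), (gV v : ℤ)


end HGraph

namespace HarmonicTo

variable {Gt G : HGraph} (f : HarmonicTo Gt G)

/-- The preimage of an edge set under a harmonic morphism. -/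
def preim (F : Finset G.Edge) : Finset Gt.Edge := Finset.univ.filter (fun e => f.fE e ∈ F)

/-- The vertex map of the contracted morphism: a contracted vertex (component of the subgraph
spanned by `f⁻¹(F)`) is sent to the corresponding contracted vertex of `G_F`. -/
noncomputable def conFV (F : Finset G.Edge) :
    (Gt.contract (f.preim F)).V → (G.contract F).V :=
  Quotient.lift (fun w => Quotient.mk (G.contractSetoid F) (f.fV w)) (by
    intro a b hab
    apply Quotient.sound
    have hab' : Relation.EqvGen (Gt.adjOn (f.preim F)) a b := hab
    clear hab
    show Relation.EqvGen (G.adjOn F) (f.fV a) (f.fV b)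
    induction hab' with
    | rel x y hxy =>
      obtain ⟨h, hmem, hx, hy⟩ := hxy
      refine Relation.EqvGen.rel _ _ ⟨f.fH h, ?_, ?_, ?_⟩
      · have : f.fE (Gt.edge h) ∈ F := by
          simpa [HarmonicTo.preim] using hmem
        exact this
      · rw [f.root_comm, hx]
      · rw [← f.inv_comm, f.root_comm, hy]
    | refl x => exact Relation.EqvGen.refl _
    | symm x y _ ih => exact Relation.EqvGen.symm _ _ ih
    | trans x y z _ _ ih1 ih2 => exact Relation.EqvGen.trans _ _ _ ih1 ih2)

/-- The half-edge map of the contracted morphism. -/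
noncomputable def conFH (F : Finset G.Edge) :
    (Gt.contract (f.preim F)).H → (G.contract F).H :=
  fun h => ⟨f.fH h.1, fun hc => h.2 (by
    simp only [preim, Finset.mem_filter, Finset.mem_univ, true_and]
    exact hc)⟩

/-- The local vertex degree of the contracted morphism: at a contracted vertex it is the global
degree of the restriction of `f` to the corresponding component (computed at a representative
vertex of the image component); at an uncontracted vertex it is the original local degree. -/
noncomputable def conDV (F : Finset G.Edge) : (Gt.contract (f.preim F)).V → ℕ :=
  fun c => ∑ w ∈ Finset.univ.filter (fun w : Gt.V =>
      Quotient.mk (Gt.contractSetoid (f.preim F)) w = c ∧ f.fV w = f.fV (Quotient.out c)),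
    f.dV w

/-- The local half-edge degree of the contracted morphism (unchanged). -/
def conDH (F : Finset G.Edge) : (Gt.contract (f.preim F)).H → ℕ := fun h => f.dH h.1

end HarmonicTo


namespace HGraph

variable (G : HGraph) (S : Finset G.Edge)

noncomputable def contractFiber (c : (G.contract S).V) : Finset G.V :=
  Finset.univ.filter fun v => Quotient.mk (G.contractSetoid S) v = c

noncomputable def contractedEdges (c : (G.contract S).V) : Finset G.Edge :=
  Finset.univ.filter fun e => e ∈ S ∧ Quotient.mk (G.contractSetoid S) (G.root e.out) = c

variable {G}

lemma edge_out (e : G.Edge) : G.edge e.out = e :=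
  Quotient.out_eq e

lemma eq_or_eq_inv_of_edge_eq {h h' : G.H} (e : G.edge h = G.edge h') :
    h' = h ∨ h' = G.inv h :=
  Quotient.exact e

lemma card_filter_edge_eq (e : G.Edge) : (Finset.univ.filter fun h => G.edge h = e).card = 2 := by
  induction e using Quotient.inductionOn with
  | h h₀ =>
    change (Finset.univ.filter fun h => G.edge h = G.edge h₀).card = 2
    have hpair : (Finset.univ.filter fun h => G.edge h = G.edge h₀) = {h₀, G.inv h₀} := by
      ext h
      simp only [Finset.mem_filter, Finset.mem_univ, true_and, Finset.mem_insert,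
        Finset.mem_singleton]
      refine ⟨fun he => G.eq_or_eq_inv_of_edge_eq he.symm, ?_⟩
      rintro (rfl | rfl)
      exacts [rfl, G.edge_inv h₀]
    rw [hpair, Finset.card_pair (G.inv_ne h₀).symm]

variable {S}

lemma mk_root_eq_of_edge_eq {h h' : G.H} (hS : G.edge h ∈ S) (he : G.edge h = G.edge h') :
    Quotient.mk (G.contractSetoid S) (G.root h) = Quotient.mk (G.contractSetoid S) (G.root h') := by
  rcases G.eq_or_eq_inv_of_edge_eq he with rfl | rfl
  · rfl
  · exact Quotient.sound (Relation.EqvGen.rel _ _ ⟨h, hS, rfl, rfl⟩)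

variable (S)

lemma card_filter_mk_root_eq (c : (G.contract S).V) :
    (Finset.univ.filter fun h => Quotient.mk (G.contractSetoid S) (G.root h) = c).card
      = ∑ v ∈ G.contractFiber S c, G.val v := by
  rw [Finset.card_eq_sum_card_fiberwise (f := G.root) (t := G.contractFiber S c)
    (fun h hh => by simpa [contractFiber] using hh)]
  refine Finset.sum_congr rfl fun v hv => congrArg Finset.card ?_
  simp only [contractFiber, Finset.mem_filter, Finset.mem_univ, true_and] at hv
  ext h
  simp only [Finset.mem_filter, Finset.mem_univ, true_and, and_iff_right_iff_imp]
  rintro rfl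
  exact hv

lemma card_filter_edge_mem_mk_root_eq (c : (G.contract S).V) :
    (Finset.univ.filter fun h =>
        G.edge h ∈ S ∧ Quotient.mk (G.contractSetoid S) (G.root h) = c).card
      = 2 * (G.contractedEdges S c).card := by
  have hmaps : ∀ h ∈ Finset.univ.filter (fun h =>
      G.edge h ∈ S ∧ Quotient.mk (G.contractSetoid S) (G.root h) = c),
      G.edge h ∈ G.contractedEdges S c := by
    intro h hh
    simp only [contractedEdges, Finset.mem_filter, Finset.mem_univ, true_and] at hh ⊢
    exact ⟨hh.1, (mk_root_eq_of_edge_eq hh.1 (edge_out _).symm).symm.trans hh.2⟩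
  rw [Finset.card_eq_sum_card_fiberwise hmaps, mul_comm, ← smul_eq_mul, ← Finset.sum_const]
  refine Finset.sum_congr rfl fun e he => ?_
  simp only [contractedEdges, Finset.mem_filter, Finset.mem_univ, true_and] at he
  rw [← card_filter_edge_eq e, Finset.filter_filter]
  congr 1
  ext h
  simp only [Finset.mem_filter, Finset.mem_univ, true_and, and_iff_right_iff_imp]
  rintro rfl
  have hS : G.edge (G.edge h).out ∈ S := by rw [edge_out]; exact he.1
  exact ⟨he.1, (mk_root_eq_of_edge_eq hS (edge_out _)).symm.trans he.2⟩

lemma val_contract (c : (G.contract S).V) :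
    (G.contract S).val c = (Finset.univ.filter fun h =>
      G.edge h ∉ S ∧ Quotient.mk (G.contractSetoid S) (G.root h) = c).card := by
  refine Finset.card_bij (fun h _ => h.1) ?_ (fun _ _ _ _ => Subtype.ext) ?_
  · intro h hh
    simp only [Finset.mem_filter, Finset.mem_univ, true_and] at hh ⊢
    exact ⟨h.2, hh⟩
  · intro h hh
    simp only [Finset.mem_filter, Finset.mem_univ, true_and] at hh
    exact ⟨⟨h, hh.1⟩, Finset.mem_filter.mpr ⟨Finset.mem_univ _, hh.2⟩, rfl⟩

lemma val_contract_add_two_mul_card (c : (G.contract S).V) :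
    (G.contract S).val c + 2 * (G.contractedEdges S c).card
      = ∑ v ∈ G.contractFiber S c, G.val v := by
  have hsplit := Finset.card_filter_add_card_filter_not
    (s := Finset.univ.filter fun h => Quotient.mk (G.contractSetoid S) (G.root h) = c)
    (fun h => G.edge h ∈ S)
  rw [Finset.filter_filter, Finset.filter_filter] at hsplit
  rw [val_contract, ← card_filter_edge_mem_mk_root_eq, ← card_filter_mk_root_eq, ← hsplit,
    add_comm]
  congr 2 <;> ext h <;> simp only [Finset.mem_filter_univ, and_comm]

lemma contractGenus_eq (gV : G.V → ℕ) (c : (G.contract S).V) :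
    G.contractGenus S gV c = ((G.contractedEdges S c).card : ℤ) - (G.contractFiber S c).card
      + 1 + ∑ v ∈ G.contractFiber S c, (gV v : ℤ) := by
  simp only [contractGenus, Nat.card_eq_fintype_card, Fintype.card_subtype]
  rw [finsum_cond_eq_sum_of_cond_iff _ fun _ =>
    (Finset.mem_filter_univ _).symm]
  rfl

theorem chiZ_contract (gV : G.V → ℕ) (c : (G.contract S).V) :
    (G.contract S).chiZ (G.contractGenus S gV) c
      = ∑ v ∈ G.contractFiber S c, G.chiZ (fun u => (gV u : ℤ)) v := by
  have hval := congrArg (Nat.cast : ℕ → ℤ) (val_contract_add_two_mul_card S c)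
  push_cast at hval
  simp only [chiZ, contractGenus_eq, Finset.sum_sub_distrib, Finset.sum_const, nsmul_eq_mul,
    ← Finset.mul_sum]
  linarith

end HGraph

namespace HarmonicTo

variable {Gt G : HGraph} (f : HarmonicTo Gt G) (F : Finset G.Edge)

lemma edge_mem_preim {x : Gt.H} : Gt.edge x ∈ f.preim F ↔ G.edge (f.fH x) ∈ F :=
  Finset.mem_filter_univ _

noncomputable def componentDegreeAt (c : (Gt.contract (f.preim F)).V) (v : G.V) : ℕ :=
  ∑ w ∈ Finset.univ.filter (fun w : Gt.V =>
      Quotient.mk (Gt.contractSetoid (f.preim F)) w = c ∧ f.fV w = v), f.dV w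

lemma componentDegreeAt_root (c : (Gt.contract (f.preim F)).V) (h : G.H) :
    f.componentDegreeAt F c (G.root h)
      = ∑ x ∈ Finset.univ.filter (fun x : Gt.H =>
          Quotient.mk (Gt.contractSetoid (f.preim F)) (Gt.root x) = c ∧ f.fH x = h),
          f.dH x := by
  rw [← Finset.sum_fiberwise_of_maps_to (g := Gt.root)
      (t := Finset.univ.filter (fun w : Gt.V =>
        Quotient.mk (Gt.contractSetoid (f.preim F)) w = c ∧ f.fV w = G.root h))
      (fun x hx => by
        simp only [Finset.mem_filter, Finset.mem_univ, true_and] at hx ⊢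
        exact ⟨hx.1, by rw [← f.root_comm, hx.2]⟩)]
  refine Finset.sum_congr rfl fun w hw => ?_
  simp only [Finset.mem_filter, Finset.mem_univ, true_and] at hw
  rw [Finset.filter_filter, f.harm w h hw.2.symm]
  congr 1
  ext x
  simp only [Finset.mem_filter, Finset.mem_univ, true_and]
  constructor
  · rintro ⟨rfl, hx⟩
    exact ⟨⟨hw.1, hx⟩, rfl⟩
  · rintro ⟨⟨-, hx⟩, rfl⟩
    exact ⟨rfl, hx⟩

/-- Harmonicity at the two ends of an edge of `F` writes both degrees as the same sum over the
half-edges of `f⁻¹(F)` in `c` above that edge, matched by the involution. -/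
lemma componentDegreeAt_eq_of_adjOn (c : (Gt.contract (f.preim F)).V) {v v' : G.V}
    (hadj : G.adjOn F v v') : f.componentDegreeAt F c v = f.componentDegreeAt F c v' := by
  obtain ⟨h, hF, rfl, rfl⟩ := hadj
  have hinv : ∀ {h' : G.H}, G.edge h' ∈ F → ∀ {x : Gt.H},
      Quotient.mk (Gt.contractSetoid (f.preim F)) (Gt.root x) = c ∧ f.fH x = h' →
      Quotient.mk (Gt.contractSetoid (f.preim F)) (Gt.root (Gt.inv x)) = c ∧
        f.fH (Gt.inv x) = G.inv h' := by
    rintro h' hF' x ⟨rfl, rfl⟩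
    have hmem : Gt.edge x ∈ f.preim F := (f.edge_mem_preim F).mpr hF'
    exact ⟨(HGraph.mk_root_eq_of_edge_eq hmem (Gt.edge_inv x).symm).symm, f.inv_comm x⟩
  rw [f.componentDegreeAt_root, f.componentDegreeAt_root]
  refine Finset.sum_nbij' Gt.inv Gt.inv ?_ ?_ (fun x _ => Gt.inv_inv x)
    (fun x _ => Gt.inv_inv x) (fun x _ => (f.dH_inv x).symm)
  · intro x hx
    simp only [Finset.mem_filter, Finset.mem_univ, true_and] at hx ⊢
    exact hinv hF hx
  · intro x hx
    simp only [Finset.mem_filter, Finset.mem_univ, true_and] at hx ⊢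
    rw [← G.inv_inv h]
    exact hinv (by rwa [G.edge_inv]) hx

lemma componentDegreeAt_eq_of_mk_eq (c : (Gt.contract (f.preim F)).V) {v v' : G.V}
    (h : Quotient.mk (G.contractSetoid F) v = Quotient.mk (G.contractSetoid F) v') :
    f.componentDegreeAt F c v = f.componentDegreeAt F c v' := by
  obtain hgen : Relation.EqvGen (G.adjOn F) v v' := Quotient.exact h
  clear h
  induction hgen with
  | rel x y hxy => exact f.componentDegreeAt_eq_of_adjOn F c hxy
  | refl x => rfl
  | symm x y _ ih => exact ih.symm
  | trans x y z _ _ ih₁ ih₂ => exact ih₁.trans ih₂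

lemma conFV_mk (w : Gt.V) :
    f.conFV F (Quotient.mk (Gt.contractSetoid (f.preim F)) w)
      = Quotient.mk (G.contractSetoid F) (f.fV w) := rfl

lemma conDV_eq_componentDegreeAt {c : (Gt.contract (f.preim F)).V} {v : G.V}
    (hv : f.conFV F c = Quotient.mk (G.contractSetoid F) v) :
    f.conDV F c = f.componentDegreeAt F c v := by
  refine f.componentDegreeAt_eq_of_mk_eq F c (Eq.trans ?_ hv)
  conv_rhs => rw [← Quotient.out_eq c]
  rfl

lemma conDV_pos (c : (Gt.contract (f.preim F)).V) : 0 < f.conDV F c :=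
  Finset.sum_pos' (fun _ _ => Nat.zero_le _)
    ⟨c.out, Finset.mem_filter.mpr ⟨Finset.mem_univ _, Quotient.out_eq c, rfl⟩, f.dV_pos _⟩

lemma sum_conDH (c : (Gt.contract (f.preim F)).V) (h : (G.contract F).H) :
    ∑ x ∈ Finset.univ.filter (fun x : (Gt.contract (f.preim F)).H =>
        (Gt.contract (f.preim F)).root x = c ∧ f.conFH F x = h), f.conDH F x
      = ∑ x ∈ Finset.univ.filter (fun x : Gt.H =>
          Quotient.mk (Gt.contractSetoid (f.preim F)) (Gt.root x) = c ∧ f.fH x = h.1),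
          f.dH x := by
  refine Finset.sum_bij (fun x _ => x.1) ?_ (fun _ _ _ _ => Subtype.ext) ?_ (fun _ _ => rfl)
  · intro x hx
    simp only [Finset.mem_filter, Finset.mem_univ, true_and] at hx ⊢
    exact ⟨hx.1, congrArg Subtype.val hx.2⟩
  · intro x hx
    simp only [Finset.mem_filter, Finset.mem_univ, true_and] at hx
    have hx' : Gt.edge x ∉ f.preim F := by rw [f.edge_mem_preim, hx.2]; exact h.2
    exact ⟨⟨x, hx'⟩, Finset.mem_filter.mpr ⟨Finset.mem_univ _, hx.1, Subtype.ext hx.2⟩, rfl⟩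

lemma conDV_eq_sum_conDH (c : (Gt.contract (f.preim F)).V) (h : (G.contract F).H)
    (hroot : (G.contract F).root h = f.conFV F c) :
    f.conDV F c = ∑ x ∈ Finset.univ.filter (fun x : (Gt.contract (f.preim F)).H =>
        (Gt.contract (f.preim F)).root x = c ∧ f.conFH F x = h), f.conDH F x := by
  rw [f.sum_conDH, ← f.componentDegreeAt_root]
  exact f.conDV_eq_componentDegreeAt F hroot.symm

lemma sum_conDV_eq (v : G.V) :
    ∑ c ∈ Finset.univ.filter (fun c => f.conFV F c = Quotient.mk (G.contractSetoid F) v),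
        f.conDV F c
      = ∑ w ∈ Finset.univ.filter (fun w => f.fV w = v), f.dV w := by
  have hmaps : ∀ w ∈ Finset.univ.filter (fun w => f.fV w = v),
      Quotient.mk (Gt.contractSetoid (f.preim F)) w ∈ Finset.univ.filter
        (fun c => f.conFV F c = Quotient.mk (G.contractSetoid F) v) := by
    intro w hw
    simp only [Finset.mem_filter, Finset.mem_univ, true_and] at hw
    exact Finset.mem_filter.mpr
      ⟨Finset.mem_univ (α := (Gt.contract (f.preim F)).V) _, by rw [conFV_mk, hw]⟩
  rw [← Finset.sum_fiberwise_of_maps_to hmaps]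
  refine Finset.sum_congr rfl fun c hc => ?_
  simp only [Finset.mem_filter, Finset.mem_univ, true_and] at hc
  rw [f.conDV_eq_componentDegreeAt F hc, componentDegreeAt, Finset.filter_filter]
  congr 1
  ext w
  simp only [Finset.mem_filter_univ, and_comm]

theorem ram_conDV_eq_sum_ram (gVt : Gt.V → ℕ) (gV : G.V → ℕ)
    (c : (Gt.contract (f.preim F)).V) :
    (f.conDV F c : ℤ) * (G.contract F).chiZ (G.contractGenus F gV) (f.conFV F c)
        - (Gt.contract (f.preim F)).chiZ (Gt.contractGenus (f.preim F) gVt) c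
      = ∑ w ∈ Gt.contractFiber (f.preim F) c,
          f.Ram (fun u => (gVt u : ℤ)) (fun u => (gV u : ℤ)) w := by
  rw [HGraph.chiZ_contract, HGraph.chiZ_contract, Finset.mul_sum]
  simp only [Ram, Finset.sum_sub_distrib]
  congr 1
  have hmaps : ∀ w ∈ Gt.contractFiber (f.preim F) c, f.fV w ∈ G.contractFiber F (f.conFV F c) := by
    intro w hw
    rw [HGraph.contractFiber, Finset.mem_filter_univ] at hw ⊢
    rw [← hw, conFV_mk]
  rw [← Finset.sum_fiberwise_of_maps_to hmaps]
  refine Finset.sum_congr rfl fun v hv => ?_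
  rw [HGraph.contractFiber, Finset.mem_filter_univ] at hv
  rw [f.conDV_eq_componentDegreeAt F hv.symm, componentDegreeAt, HGraph.contractFiber,
    Finset.filter_filter, Nat.cast_sum, Finset.sum_mul]
  refine Finset.sum_congr rfl fun w hw => ?_
  rw [(Finset.mem_filter_univ w).mp hw |>.2]

end HarmonicTo

theorem contract_harmonic_general (Gt G : HGraph) (gVt : Gt.V → ℕ) (gV : G.V → ℕ)
    (f : HarmonicTo Gt G)
    (F : Finset G.Edge) (D : ℕ)
    (hD : ∀ v : G.V, ∑ w ∈ Finset.univ.filter (fun w => f.fV w = v), f.dV w = D) :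
    -- `f_F` is a morphism of graphs:
    (∀ h : (Gt.contract (f.preim F)).H,
        (G.contract F).root (f.conFH F h) = f.conFV F ((Gt.contract (f.preim F)).root h)) ∧
    (∀ h, f.conFH F ((Gt.contract (f.preim F)).inv h) = (G.contract F).inv (f.conFH F h)) ∧
    -- the local degrees are positive and make it harmonic:
    (∀ c, 0 < f.conDV F c) ∧
    (∀ h, 0 < f.conDH F h) ∧
    (∀ h, f.conDH F ((Gt.contract (f.preim F)).inv h) = f.conDH F h) ∧
    (∀ (c : (Gt.contract (f.preim F)).V) (h : (G.contract F).H),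
        (G.contract F).root h = f.conFV F c →
        f.conDV F c = ∑ x ∈ Finset.univ.filter
          (fun x : (Gt.contract (f.preim F)).H =>
            (Gt.contract (f.preim F)).root x = c ∧ f.conFH F x = h), f.conDH F x) ∧
    -- `f_F` has the same global degree as `f`:
    (∀ v : (G.contract F).V,
        ∑ c ∈ Finset.univ.filter (fun c => f.conFV F c = v), f.conDV F c = D) ∧
    -- if `f` is effective then so is `f_F`:
    ((∀ w : Gt.V, 0 ≤ f.Ram (fun u => (gVt u : ℤ)) (fun u => (gV u : ℤ)) w) →
      ∀ c : (Gt.contract (f.preim F)).V,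
        0 ≤ (f.conDV F c : ℤ) * (G.contract F).chiZ (G.contractGenus F gV) (f.conFV F c)
            - (Gt.contract (f.preim F)).chiZ (Gt.contractGenus (f.preim F) gVt) c) ∧
    -- if `f` is unramified then so is `f_F`:
    ((∀ w : Gt.V, f.Ram (fun u => (gVt u : ℤ)) (fun u => (gV u : ℤ)) w = 0) →
      ∀ c : (Gt.contract (f.preim F)).V,
        (f.conDV F c : ℤ) * (G.contract F).chiZ (G.contractGenus F gV) (f.conFV F c)
            - (Gt.contract (f.preim F)).chiZ (Gt.contractGenus (f.preim F) gVt) c = 0) := by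
  refine ⟨fun h => congrArg (Quotient.mk (G.contractSetoid F)) (f.root_comm h.1),
    fun h => Subtype.ext (f.inv_comm h.1), f.conDV_pos F, fun h => f.dH_pos h.1,
    fun h => f.dH_inv h.1, f.conDV_eq_sum_conDH F, fun v => ?_, fun heff c => ?_,
    fun hunr c => ?_⟩
  · induction v using Quotient.inductionOn with
    | h v => exact (f.sum_conDV_eq F v).trans (hD v)
  · rw [f.ram_conDV_eq_sum_ram]
    exact Finset.sum_nonneg fun w _ => heff w
  · rw [f.ram_conDV_eq_sum_ram]
    exact Finset.sum_eq_zero fun w _ => hunr w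

/-- The contraction `f_F : G̃_{F̃} → G_F` of a harmonic morphism `f : G̃ → G`
along an edge set `F ⊆ E(G)` (with `F̃ = f⁻¹(F)`), with local vertex degrees given at contracted
vertices by the global degrees of the restrictions of `f` to the contracted components and
unchanged elsewhere, is a harmonic morphism of the same global degree as `f`; moreover if `f` is
effective then so is `f_F`, and if `f` is unramified then so is `f_F`. -/
theorem contract_harmonic (Gt G : HGraph) (gVt : Gt.V → ℕ) (gV : G.V → ℕ)
    (f : HarmonicTo Gt G) (hGconn : G.Connected)
    (F : Finset G.Edge) (D : ℕ)
    (hD : ∀ v : G.V, ∑ w ∈ Finset.univ.filter (fun w => f.fV w = v), f.dV w = D) :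
    -- `f_F` is a morphism of graphs:
    (∀ h : (Gt.contract (f.preim F)).H,
        (G.contract F).root (f.conFH F h) = f.conFV F ((Gt.contract (f.preim F)).root h)) ∧
    (∀ h, f.conFH F ((Gt.contract (f.preim F)).inv h) = (G.contract F).inv (f.conFH F h)) ∧
    -- the local degrees are positive and make it harmonic:
    (∀ c, 0 < f.conDV F c) ∧
    (∀ h, 0 < f.conDH F h) ∧
    (∀ h, f.conDH F ((Gt.contract (f.preim F)).inv h) = f.conDH F h) ∧
    (∀ (c : (Gt.contract (f.preim F)).V) (h : (G.contract F).H),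
        (G.contract F).root h = f.conFV F c →
        f.conDV F c = ∑ x ∈ Finset.univ.filter
          (fun x : (Gt.contract (f.preim F)).H =>
            (Gt.contract (f.preim F)).root x = c ∧ f.conFH F x = h), f.conDH F x) ∧
    -- `f_F` has the same global degree as `f`:
    (∀ v : (G.contract F).V,
        ∑ c ∈ Finset.univ.filter (fun c => f.conFV F c = v), f.conDV F c = D) ∧
    -- if `f` is effective then so is `f_F`:
    ((∀ w : Gt.V, 0 ≤ f.Ram (fun u => (gVt u : ℤ)) (fun u => (gV u : ℤ)) w) →
      ∀ c : (Gt.contract (f.preim F)).V,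
        0 ≤ (f.conDV F c : ℤ) * (G.contract F).chiZ (G.contractGenus F gV) (f.conFV F c)
            - (Gt.contract (f.preim F)).chiZ (Gt.contractGenus (f.preim F) gVt) c) ∧
    -- if `f` is unramified then so is `f_F`:
    ((∀ w : Gt.V, f.Ram (fun u => (gVt u : ℤ)) (fun u => (gV u : ℤ)) w = 0) →
      ∀ c : (Gt.contract (f.preim F)).V,
        (f.conDV F c : ℤ) * (G.contract F).chiZ (G.contractGenus F gV) (f.conFV F c)
            - (Gt.contract (f.preim F)).chiZ (Gt.contractGenus (f.preim F) gVt) c = 0) :=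
  contract_harmonic_general Gt G gVt gV f F D hD
end

section
/- Let π : G̃ → G be a double cover of weighted graphs with g(G) = g, and let the torus rank be t(G̃/G) = b₁(G̃) − b₁(G), where b₁ denotes the first Betti number |E| − |V| + 1 of a connected graph. Then t(G̃/G) ≤ g − 1, and equality holds if and only if: (a) every connected component of the dilation subgraph G_dil has genus 1 (i.e. is an isolated vertex of genus one or a cycle all of whose vertices have genus zero), and (b) g(x) = 0 for every vertex x of G not in G_dil. -/
open scoped Classical

namespace HarmonicTo

variable {Gt G : HGraph} (f : HarmonicTo Gt G)

/-- A vertex of the target of a double cover is dilated if it has a unique preimage. -/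
def DilV (x : G.V) : Prop := Nat.card {w : Gt.V // f.fV w = x} = 1

/-- An edge of the target of a double cover is dilated if it has a unique preimage. -/
def DilE (e : G.Edge) : Prop := Nat.card {a : Gt.Edge // f.fE a = e} = 1

/-- Adjacency through a dilated edge. -/
def dilAdj (v w : G.V) : Prop :=
  ∃ h, f.DilE (G.edge h) ∧ G.root h = v ∧ G.root (G.inv h) = w

/-- Reachability inside the dilation subgraph. -/
def dilReach (v w : G.V) : Prop := Relation.ReflTransGen f.dilAdj v w

/-- The valence of a vertex inside the dilation subgraph. -/
noncomputable def dval (x : G.V) : ℕ :=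
  Nat.card {h : G.H // G.root h = x ∧ f.DilE (G.edge h)}

/-- The genus of the connected component of the dilation subgraph containing `y`. -/
noncomputable def dilCompGenus (gV : G.V → ℕ) (y : G.V) : ℤ :=
  (Nat.card {e : G.Edge // f.DilE e ∧ f.dilReach y (G.root (Quotient.out e))} : ℤ)
    - Nat.card {z : G.V // f.dilReach y z} + 1
    + ∑ᶠ (z : G.V) (_ : f.dilReach y z), (gV z : ℤ)

/-- The first Betti number of the connected component of the dilation subgraph containing `y`. -/
noncomputable def dilCompB1 (y : G.V) : ℤ :=
  (Nat.card {e : G.Edge // f.DilE e ∧ f.dilReach y (G.root (Quotient.out e))} : ℤ)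
    - Nat.card {z : G.V // f.dilReach y z} + 1

end HarmonicTo


section Aux

open Finset

variable {Gt G : HGraph} (f : HarmonicTo Gt G)

lemma aux_card_nat {α : Type} [Fintype α] (p : α → Prop) [DecidablePred p] :
    Nat.card {x // p x} = (Finset.univ.filter p).card := by
  rw [Nat.card_eq_fintype_card, Fintype.card_subtype]

lemma mem_edge_fiber_iff (G : HGraph) (h' h : G.H) :
    G.edge h' = G.edge h ↔ h' = h ∨ h' = G.inv h := by
  constructor
  · intro he
    have hx : G.edgeSetoid.r h' h := Quotient.exact he
    rcases hx with h1 | h1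
    · exact Or.inl h1.symm
    · right; rw [h1, G.inv_inv]
  · rintro (rfl | rfl)
    · rfl
    · exact G.edge_inv h

lemma edge_out_eq (G : HGraph) (e : G.Edge) : G.edge (Quotient.out e) = e :=
  Quotient.out_eq e

lemma edge_halves (G : HGraph) (h0 : G.H) :
    (univ.filter fun h => G.edge h = G.edge h0) = {h0, G.inv h0} := by
  ext h
  simp [mem_edge_fiber_iff]

lemma card_edge_halves (G : HGraph) (h0 : G.H) :
    (univ.filter fun h => G.edge h = G.edge h0).card = 2 := by
  rw [edge_halves, Finset.card_insert_of_notMem (by simp [Ne.symm (G.inv_ne h0)]),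
    Finset.card_singleton]

lemma card_edge_fiber (G : HGraph) (e : G.Edge) :
    (univ.filter fun h => G.edge h = e).card = 2 := by
  have := card_edge_halves G (Quotient.out e)
  rwa [edge_out_eq] at this

/-- generic: if a finset of positives sums to 2, its card is 1 or 2 -/
lemma card_of_sum_two {α : Type} (s : Finset α) (d : α → ℕ)
    (hpos : ∀ x ∈ s, 0 < d x) (hsum : ∑ x ∈ s, d x = 2) : s.card = 1 ∨ s.card = 2 := by
  have h1 : s.card • 1 ≤ ∑ x ∈ s, d x := Finset.card_nsmul_le_sum s d 1 (fun x hx => hpos x hx)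
  rw [smul_eq_mul, mul_one] at h1
  have h2 : s.Nonempty := by
    by_contra h
    rw [Finset.not_nonempty_iff_eq_empty] at h
    simp [h] at hsum
  have h3 := Finset.card_pos.mpr h2
  omega

lemma card_one_of_two_le {α : Type} [DecidableEq α] (s : Finset α) (d : α → ℕ)
    (hpos : ∀ x ∈ s, 0 < d x) (hsum : ∑ x ∈ s, d x = 2) {w} (hw : w ∈ s) (h2 : 2 ≤ d w) :
    s.card = 1 := by
  by_contra hne
  have hc1 : 1 ≤ s.card := Finset.card_pos.mpr ⟨w, hw⟩
  have hce : (s.erase w).card = s.card - 1 := Finset.card_erase_of_mem hw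
  have h1 : 1 ≤ (s.erase w).card := by omega
  obtain ⟨u, hu⟩ := Finset.card_pos.mp h1
  have hsplit : d w + ∑ x ∈ s.erase w, d x = ∑ x ∈ s, d x := Finset.add_sum_erase s d hw
  have h3 : d u ≤ ∑ x ∈ s.erase w, d x :=
    Finset.single_le_sum (fun i _ => Nat.zero_le _) hu
  have hu' := hpos u (Finset.mem_of_mem_erase hu)
  omega

lemma dilV_iff (x : G.V) :
    f.DilV x ↔ (univ.filter fun w => f.fV w = x).card = 1 := by
  unfold HarmonicTo.DilV
  rw [aux_card_nat]

lemma sum_dH_fiber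
    (hdeg2 : ∀ v : G.V, ∑ w ∈ Finset.univ.filter (fun w => f.fV w = v), f.dV w = 2)
    (h : G.H) : ∑ x ∈ univ.filter (fun x => f.fH x = h), f.dH x = 2 := by
  have hmaps : ∀ x ∈ univ.filter (fun x => f.fH x = h),
      Gt.root x ∈ univ.filter (fun w => f.fV w = G.root h) := by
    intro x hx
    simp only [Finset.mem_filter, Finset.mem_univ, true_and] at hx ⊢
    rw [← hx, f.root_comm]
  rw [← Finset.sum_fiberwise_of_maps_to hmaps f.dH, ← hdeg2 (G.root h)]
  refine Finset.sum_congr rfl fun w hw => ?_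
  simp only [Finset.mem_filter, Finset.mem_univ, true_and] at hw
  rw [f.harm w h hw.symm]
  congr 1
  ext x
  simp only [Finset.mem_filter, Finset.mem_univ, true_and]
  tauto

lemma hcard_inv (h : G.H) :
    (univ.filter fun x => f.fH x = G.inv h).card = (univ.filter fun x => f.fH x = h).card := by
  refine Finset.card_bij' (fun x _ => Gt.inv x) (fun x _ => Gt.inv x) ?_ ?_ ?_ ?_
  · intro a ha
    simp only [Finset.mem_filter, Finset.mem_univ, true_and] at ha ⊢
    rw [f.inv_comm, ha, G.inv_inv]
  · intro a ha
    simp only [Finset.mem_filter, Finset.mem_univ, true_and] at ha ⊢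
    rw [f.inv_comm, ha]
  · intro a _; exact Gt.inv_inv a
  · intro a _; exact Gt.inv_inv a

lemma card_fiberE (h : G.H) :
    Nat.card {a : Gt.Edge // f.fE a = G.edge h} = (univ.filter fun x => f.fH x = h).card := by
  rw [← aux_card_nat]
  apply Nat.card_congr
  apply Equiv.symm
  apply Equiv.ofBijective
    (f := fun x : {x : Gt.H // f.fH x = h} =>
      (⟨Gt.edge x.1, by
          show G.edge (f.fH x.1) = G.edge h
          rw [x.2]⟩ : {a : Gt.Edge // f.fE a = G.edge h}))
  constructor
  · rintro ⟨x, hx⟩ ⟨x', hx'⟩ hxx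
    have hee : Gt.edge x' = Gt.edge x := (congrArg Subtype.val hxx).symm
    rcases (mem_edge_fiber_iff Gt x' x).mp hee with h1 | h1
    · exact Subtype.ext h1.symm
    · exfalso
      apply G.inv_ne h
      rw [← hx, ← f.inv_comm, ← h1, hx', hx]
  · rintro ⟨a, ha⟩
    have hout : Gt.edge (Quotient.out a) = a := edge_out_eq Gt a
    have h2 : G.edge (f.fH (Quotient.out a)) = G.edge h := by
      rw [show G.edge (f.fH (Quotient.out a)) = f.fE (Gt.edge (Quotient.out a)) from rfl,
        hout, ha]
    rcases (mem_edge_fiber_iff G _ _).mp h2 with h1 | h1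
    · exact ⟨⟨Quotient.out a, h1⟩, Subtype.ext hout⟩
    · refine ⟨⟨Gt.inv (Quotient.out a), ?_⟩, Subtype.ext ?_⟩
      · rw [f.inv_comm, h1, G.inv_inv]
      · show Gt.edge (Gt.inv (Quotient.out a)) = a
        rw [Gt.edge_inv, hout]

lemma dilE_iff_h (h : G.H) :
    f.DilE (G.edge h) ↔ (univ.filter fun x => f.fH x = h).card = 1 := by
  unfold HarmonicTo.DilE
  rw [card_fiberE]

lemma dilE_iff_out (e : G.Edge) :
    f.DilE e ↔ (univ.filter fun x => f.fH x = Quotient.out e).card = 1 := by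
  have := dilE_iff_h f (Quotient.out e)
  rwa [edge_out_eq] at this

lemma card_fiberE_out (e : G.Edge) :
    (univ.filter fun a => f.fE a = e).card
      = (univ.filter fun x => f.fH x = Quotient.out e).card := by
  have := card_fiberE f (Quotient.out e)
  rw [edge_out_eq] at this
  rw [← this, aux_card_nat]

lemma hcard_mem (hdeg2 : ∀ v : G.V, ∑ w ∈ Finset.univ.filter (fun w => f.fV w = v), f.dV w = 2)
    (h : G.H) : (univ.filter fun x => f.fH x = h).card = 1
      ∨ (univ.filter fun x => f.fH x = h).card = 2 :=
  card_of_sum_two _ f.dH (fun x _ => f.dH_pos x) (sum_dH_fiber f hdeg2 h)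

lemma dilE_root (hdeg2 : ∀ v : G.V, ∑ w ∈ Finset.univ.filter (fun w => f.fV w = v), f.dV w = 2)
    (h : G.H) (hd : f.DilE (G.edge h)) : f.DilV (G.root h) := by
  rw [dilE_iff_h] at hd
  obtain ⟨x0, hx0⟩ := Finset.card_eq_one.mp hd
  have hx0mem : x0 ∈ univ.filter (fun x => f.fH x = h) := by rw [hx0]; exact Finset.mem_singleton_self x0
  have hfx0 : f.fH x0 = h := by
    simpa using hx0mem
  have hdH : f.dH x0 = 2 := by
    have hs := sum_dH_fiber f hdeg2 h
    rw [hx0, Finset.sum_singleton] at hs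
    exact hs
  have hw : f.fV (Gt.root x0) = G.root h := by
    rw [← hfx0, ← f.root_comm]
  have hdVw : 2 ≤ f.dV (Gt.root x0) := by
    rw [f.harm (Gt.root x0) h hw.symm]
    have hmem : x0 ∈ univ.filter (fun x => Gt.root x = Gt.root x0 ∧ f.fH x = h) := by
      simp [hfx0]
    calc 2 = f.dH x0 := hdH.symm
    _ ≤ _ := Finset.single_le_sum (fun i _ => Nat.zero_le _) hmem
  rw [dilV_iff]
  refine card_one_of_two_le _ f.dV (fun x _ => f.dV_pos x) (hdeg2 (G.root h)) ?_ hdVw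
  simp [hw]

lemma exists_pre {x : G.V} (hx : f.DilV x) : ∃ w, f.fV w = x := by
  rw [dilV_iff] at hx
  obtain ⟨w, hw⟩ := Finset.card_eq_one.mp hx
  have : w ∈ univ.filter (fun w => f.fV w = x) := by rw [hw]; exact Finset.mem_singleton_self w
  exact ⟨w, by simpa using this⟩

lemma fiber_singleton {x : G.V} (hx : f.DilV x) {w : Gt.V} (hw : f.fV w = x) :
    univ.filter (fun w => f.fV w = x) = {w} := by
  rw [dilV_iff] at hx
  obtain ⟨w', hw'⟩ := Finset.card_eq_one.mp hx
  have hmem : w ∈ univ.filter (fun w => f.fV w = x) := by simp [hw]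
  rw [hw'] at hmem ⊢
  rw [Finset.mem_singleton] at hmem
  rw [hmem]

lemma dV_two (hdeg2 : ∀ v : G.V, ∑ w ∈ Finset.univ.filter (fun w => f.fV w = v), f.dV w = 2)
    {x : G.V} (hx : f.DilV x) {w : Gt.V} (hw : f.fV w = x) : f.dV w = 2 := by
  have hs := hdeg2 x
  rw [fiber_singleton f hx hw, Finset.sum_singleton] at hs
  exact hs

lemma dval_card (x : G.V) :
    f.dval x = (univ.filter fun h => G.root h = x ∧ f.DilE (G.edge h)).card := by
  unfold HarmonicTo.dval
  rw [aux_card_nat]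

lemma dval_eq_zero (hdeg2 : ∀ v : G.V, ∑ w ∈ Finset.univ.filter (fun w => f.fV w = v), f.dV w = 2)
    {x : G.V} (hx : ¬ f.DilV x) : f.dval x = 0 := by
  rw [dval_card, Finset.card_eq_zero, Finset.filter_eq_empty_iff]
  rintro h - ⟨hroot, hdil⟩
  exact hx (hroot ▸ dilE_root f hdeg2 h hdil)

lemma val_eq (hdeg2 : ∀ v : G.V, ∑ w ∈ Finset.univ.filter (fun w => f.fV w = v), f.dV w = 2)
    {x : G.V} (hx : f.DilV x) {w : Gt.V} (hw : f.fV w = x) :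
    Gt.val w + f.dval x = 2 * G.val x := by
  have hfib := fiber_singleton f hx hw
  have hmaps : ∀ ht ∈ univ.filter (fun ht => Gt.root ht = w),
      f.fH ht ∈ univ.filter (fun h => G.root h = x) := by
    intro ht hht
    simp only [Finset.mem_filter, Finset.mem_univ, true_and] at hht ⊢
    rw [f.root_comm, hht, hw]
  have hval : Gt.val w = ∑ h ∈ univ.filter (fun h => G.root h = x),
      ((univ.filter (fun ht => Gt.root ht = w)).filter (fun ht => f.fH ht = h)).card := by
    unfold HGraph.val
    exact Finset.card_eq_sum_card_fiberwise hmaps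
  have hfibeq : ∀ h ∈ univ.filter (fun h => G.root h = x),
      ((univ.filter (fun ht => Gt.root ht = w)).filter (fun ht => f.fH ht = h))
        = univ.filter (fun ht => f.fH ht = h) := by
    intro h hh
    simp only [Finset.mem_filter, Finset.mem_univ, true_and] at hh
    ext ht
    simp only [Finset.mem_filter, Finset.mem_univ, true_and, and_iff_right_iff_imp]
    intro hfh
    have : Gt.root ht ∈ univ.filter (fun w => f.fV w = x) := by
      simp only [Finset.mem_filter, Finset.mem_univ, true_and]
      rw [← f.root_comm, hfh, hh]
    rw [hfib, Finset.mem_singleton] at this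
    exact this
  have hval2 : Gt.val w = ∑ h ∈ univ.filter (fun h => G.root h = x),
      (univ.filter (fun ht => f.fH ht = h)).card := by
    rw [hval]; exact Finset.sum_congr rfl (fun h hh => congrArg Finset.card (hfibeq h hh))
  have hdval : f.dval x = ∑ h ∈ univ.filter (fun h => G.root h = x),
      (if f.DilE (G.edge h) then 1 else 0) := by
    rw [dval_card]
    have heq : (univ.filter fun h => G.root h = x ∧ f.DilE (G.edge h))
        = (univ.filter (fun h => G.root h = x)).filter (fun h => f.DilE (G.edge h)) := by
      ext h; simp
    rw [heq, Finset.card_filter]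
  have hvalx : 2 * G.val x = ∑ h ∈ univ.filter (fun h => G.root h = x), 2 := by
    unfold HGraph.val
    rw [Finset.sum_const, smul_eq_mul, mul_comm]
  rw [hval2, hdval, hvalx, ← Finset.sum_add_distrib]
  refine Finset.sum_congr rfl fun h _ => ?_
  rcases hcard_mem f hdeg2 h with h1 | h2
  · rw [h1, if_pos ((dilE_iff_h f h).mpr h1)]
  · rw [h2, if_neg (fun hc => by rw [(dilE_iff_h f h).mp hc] at h2; omega)]

lemma key_relation {gVt : Gt.V → ℕ} {gV : G.V → ℕ}
    (hunram : ∀ w : Gt.V, f.Ram (fun u => (gVt u : ℤ)) (fun u => (gV u : ℤ)) w = 0)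
    (hdeg2 : ∀ v : G.V, ∑ w ∈ Finset.univ.filter (fun w => f.fV w = v), f.dV w = 2)
    {x : G.V} (hx : f.DilV x) {w : Gt.V} (hw : f.fV w = x) :
    2 + 2 * (gVt w : ℤ) = 4 * (gV x : ℤ) + (f.dval x : ℤ) := by
  have hram := hunram w
  unfold HarmonicTo.Ram HGraph.chiZ at hram
  rw [hw, dV_two f hdeg2 hx hw] at hram
  have hval := val_eq f hdeg2 hx hw
  have hval' : (Gt.val w : ℤ) + (f.dval x : ℤ) = 2 * (G.val x : ℤ) := by exact_mod_cast hval
  push_cast at hram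
  linarith

lemma T_nonneg {gVt : Gt.V → ℕ} {gV : G.V → ℕ}
    (hunram : ∀ w : Gt.V, f.Ram (fun u => (gVt u : ℤ)) (fun u => (gV u : ℤ)) w = 0)
    (hdeg2 : ∀ v : G.V, ∑ w ∈ Finset.univ.filter (fun w => f.fV w = v), f.dV w = 2)
    {x : G.V} (hx : f.DilV x) :
    0 ≤ 2 * (gV x : ℤ) + (f.dval x : ℤ) - 2 := by
  obtain ⟨w, hw⟩ := exists_pre f hx
  have hkey := key_relation f hunram hdeg2 hx hw
  have h1 : (0:ℤ) ≤ (gV x : ℤ) := Int.natCast_nonneg _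
  have h2 : (0:ℤ) ≤ (gVt w : ℤ) := Int.natCast_nonneg _
  have h3 : (0:ℤ) ≤ (f.dval x : ℤ) := Int.natCast_nonneg _
  omega

lemma cardVt (hdeg2 : ∀ v : G.V, ∑ w ∈ Finset.univ.filter (fun w => f.fV w = v), f.dV w = 2) :
    (Fintype.card Gt.V : ℤ)
      = 2 * Fintype.card G.V - (univ.filter f.DilV).card := by
  have h1 : Fintype.card Gt.V = ∑ x : G.V, (univ.filter fun w => f.fV w = x).card := by
    rw [← Finset.card_univ]
    exact Finset.card_eq_sum_card_fiberwise (fun w _ => Finset.mem_univ (f.fV w))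
  have h2 : ∀ x : G.V, ((univ.filter fun w => f.fV w = x).card : ℤ)
      = 2 - (if f.DilV x then 1 else 0) := by
    intro x
    rcases card_of_sum_two _ f.dV (fun w _ => f.dV_pos w) (hdeg2 x) with hc | hc
    · rw [hc, if_pos ((dilV_iff f x).mpr hc)]; norm_num
    · rw [hc, if_neg (fun hd => by rw [(dilV_iff f x).mp hd] at hc; omega)]; norm_num
  have h3 : ((univ.filter f.DilV).card : ℤ) = ∑ x : G.V, (if f.DilV x then 1 else 0) := by
    rw [Finset.card_filter]
    push_cast
    rfl
  rw [h1]
  push_cast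
  rw [Finset.sum_congr rfl (fun x _ => h2 x), Finset.sum_sub_distrib, h3]
  simp [Finset.card_univ, mul_comm]

lemma cardEt (hdeg2 : ∀ v : G.V, ∑ w ∈ Finset.univ.filter (fun w => f.fV w = v), f.dV w = 2) :
    (Fintype.card Gt.Edge : ℤ)
      = 2 * Fintype.card G.Edge - (univ.filter f.DilE).card := by
  have h1 : Fintype.card Gt.Edge = ∑ e : G.Edge, (univ.filter fun a => f.fE a = e).card := by
    rw [← Finset.card_univ]
    exact Finset.card_eq_sum_card_fiberwise (fun a _ => Finset.mem_univ (f.fE a))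
  have h2 : ∀ e : G.Edge, ((univ.filter fun a => f.fE a = e).card : ℤ)
      = 2 - (if f.DilE e then 1 else 0) := by
    intro e
    rw [card_fiberE_out]
    rcases hcard_mem f hdeg2 (Quotient.out e) with hc | hc
    · rw [hc, if_pos ((dilE_iff_out f e).mpr hc)]; norm_num
    · rw [hc, if_neg (fun hd => by rw [(dilE_iff_out f e).mp hd] at hc; omega)]; norm_num
  have h3 : ((univ.filter f.DilE).card : ℤ) = ∑ e : G.Edge, (if f.DilE e then 1 else 0) := by
    rw [Finset.card_filter]
    push_cast
    rfl
  rw [h1]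
  push_cast
  rw [Finset.sum_congr rfl (fun e _ => h2 e), Finset.sum_sub_distrib, h3]
  simp [Finset.card_univ, mul_comm]

lemma sum_dval (hdeg2 : ∀ v : G.V, ∑ w ∈ Finset.univ.filter (fun w => f.fV w = v), f.dV w = 2) :
    ∑ x : G.V, f.dval x = 2 * (univ.filter f.DilE).card := by
  have h1 : ∀ x : G.V, f.dval x
      = ((univ.filter fun h => f.DilE (G.edge h)).filter fun h => G.root h = x).card := by
    intro x
    rw [dval_card]
    congr 1
    ext h
    simp only [Finset.mem_filter, Finset.mem_univ, true_and]
    tauto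
  rw [Finset.sum_congr rfl (fun x _ => h1 x),
    ← Finset.card_eq_sum_card_fiberwise (fun h _ => Finset.mem_univ (G.root h))]
  have hmaps : ∀ h ∈ univ.filter (fun h => f.DilE (G.edge h)),
      G.edge h ∈ univ.filter f.DilE := by
    intro h hh
    simp only [Finset.mem_filter, Finset.mem_univ, true_and] at hh ⊢
    exact hh
  rw [Finset.card_eq_sum_card_fiberwise hmaps]
  have hfib : ∀ e ∈ univ.filter f.DilE,
      ((univ.filter fun h => f.DilE (G.edge h)).filter fun h => G.edge h = e).card = 2 := by
    intro e he
    simp only [Finset.mem_filter, Finset.mem_univ, true_and] at he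
    have heq : ((univ.filter fun h => f.DilE (G.edge h)).filter fun h => G.edge h = e)
        = univ.filter fun h => G.edge h = e := by
      ext h
      simp only [Finset.mem_filter, Finset.mem_univ, true_and, and_iff_right_iff_imp]
      intro hh
      rw [hh]
      exact he
    rw [heq, card_edge_fiber]
  rw [Finset.sum_congr rfl hfib, Finset.sum_const, smul_eq_mul, mul_comm]

lemma dilReach_of_edge {y : G.V} {h0 : G.H} (hd : f.DilE (G.edge h0))
    (hy : f.dilReach y (G.root h0)) : f.dilReach y (G.root (G.inv h0)) :=
  hy.tail ⟨h0, hd, rfl, rfl⟩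

lemma dilV_of_reach
    (hdeg2 : ∀ v : G.V, ∑ w ∈ Finset.univ.filter (fun w => f.fV w = v), f.dV w = 2)
    {y z : G.V} (hy : f.DilV y) (hr : f.dilReach y z) : f.DilV z := by
  induction hr with
  | refl => exact hy
  | tail _ hadj _ =>
    obtain ⟨h0, hd, _, hw⟩ := hadj
    rw [← hw]
    have : f.DilE (G.edge (G.inv h0)) := by rwa [G.edge_inv]
    exact dilE_root f hdeg2 (G.inv h0) this

lemma comp_handshake (y : G.V) :
    ∑ z ∈ univ.filter (f.dilReach y), f.dval z
      = 2 * (univ.filter fun e => f.DilE e ∧ f.dilReach y (G.root (Quotient.out e))).card := by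
  set A := univ.filter fun h => f.DilE (G.edge h) ∧ f.dilReach y (G.root h) with hA
  -- step 1 : LHS = A.card
  have hmaps1 : ∀ h ∈ A, G.root h ∈ univ.filter (f.dilReach y) := by
    intro h hh
    simp only [hA, Finset.mem_filter, Finset.mem_univ, true_and] at hh ⊢
    exact hh.2
  have hstep1 : A.card = ∑ z ∈ univ.filter (f.dilReach y), (A.filter fun h => G.root h = z).card :=
    Finset.card_eq_sum_card_fiberwise hmaps1
  have hfib1 : ∀ z ∈ univ.filter (f.dilReach y),
      (A.filter fun h => G.root h = z).card = f.dval z := by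
    intro z hz
    simp only [Finset.mem_filter, Finset.mem_univ, true_and] at hz
    rw [dval_card]
    congr 1
    ext h
    simp only [hA, Finset.mem_filter, Finset.mem_univ, true_and]
    constructor
    · rintro ⟨⟨hd, _⟩, hr⟩; exact ⟨hr, hd⟩
    · rintro ⟨hr, hd⟩; exact ⟨⟨hd, hr ▸ hz⟩, hr⟩
  -- step 2 : A.card = 2 * edge count
  have hout_mem : ∀ h : G.H, Quotient.out (G.edge h) = h ∨ Quotient.out (G.edge h) = G.inv h := by
    intro h
    exact (mem_edge_fiber_iff G _ h).mp (edge_out_eq G (G.edge h))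
  have hmaps2 : ∀ h ∈ A, G.edge h ∈ univ.filter
      fun e => f.DilE e ∧ f.dilReach y (G.root (Quotient.out e)) := by
    intro h hh
    simp only [hA, Finset.mem_filter, Finset.mem_univ, true_and] at hh ⊢
    refine ⟨hh.1, ?_⟩
    rcases hout_mem h with ho | ho
    · rw [ho]; exact hh.2
    · rw [ho]; exact dilReach_of_edge f hh.1 hh.2
  have hstep2 : A.card = ∑ e ∈ (univ.filter
      fun e => f.DilE e ∧ f.dilReach y (G.root (Quotient.out e))),
      (A.filter fun h => G.edge h = e).card :=
    Finset.card_eq_sum_card_fiberwise hmaps2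
  have hfib2 : ∀ e ∈ (univ.filter
      fun e => f.DilE e ∧ f.dilReach y (G.root (Quotient.out e))),
      (A.filter fun h => G.edge h = e).card = 2 := by
    intro e he
    simp only [Finset.mem_filter, Finset.mem_univ, true_and] at he
    have heq : A.filter (fun h => G.edge h = e) = univ.filter fun h => G.edge h = e := by
      ext h
      simp only [hA, Finset.mem_filter, Finset.mem_univ, true_and, and_iff_right_iff_imp]
      intro hh
      have hd : f.DilE (G.edge h) := by rw [hh]; exact he.1
      refine ⟨hd, ?_⟩
      have hr := he.2
      rcases hout_mem h with ho | ho
      · rw [← hh, ho] at hr; exact hr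
      · rw [← hh, ho] at hr
        have hd' : f.DilE (G.edge (G.inv h)) := by rwa [G.edge_inv]
        have := dilReach_of_edge f hd' hr
        rwa [G.inv_inv] at this
    rw [heq, card_edge_fiber]
  rw [← Finset.sum_congr rfl hfib1, ← hstep1, hstep2, Finset.sum_congr rfl hfib2,
    Finset.sum_const, smul_eq_mul, mul_comm]

lemma comp_genus (gV : G.V → ℕ) (y : G.V) :
    2 * (f.dilCompGenus gV y - 1)
      = ∑ z ∈ univ.filter (f.dilReach y), (2 * (gV z : ℤ) + (f.dval z : ℤ) - 2) := by
  unfold HarmonicTo.dilCompGenus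
  rw [aux_card_nat (fun e => f.DilE e ∧ f.dilReach y (G.root (Quotient.out e))),
    aux_card_nat (fun z => f.dilReach y z)]
  rw [finsum_cond_eq_sum_of_cond_iff (fun z => (gV z : ℤ))
    (t := univ.filter (f.dilReach y)) (fun {x} _ => by simp)]
  have hh := comp_handshake f y
  have hhz : (∑ z ∈ univ.filter (f.dilReach y), (f.dval z : ℤ))
      = 2 * ((univ.filter fun e => f.DilE e ∧ f.dilReach y (G.root (Quotient.out e))).card : ℤ) := by
    exact_mod_cast hh
  have hsplit : ∑ z ∈ univ.filter (f.dilReach y), (2 * (gV z : ℤ) + (f.dval z : ℤ) - 2)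
      = 2 * (∑ z ∈ univ.filter (f.dilReach y), (gV z : ℤ))
        + (∑ z ∈ univ.filter (f.dilReach y), (f.dval z : ℤ))
        - 2 * ((univ.filter (f.dilReach y)).card : ℤ) := by
    rw [Finset.sum_sub_distrib, Finset.sum_add_distrib, ← Finset.mul_sum, Finset.sum_const]
    push_cast
    ring
  rw [hsplit, hhz]
  ring

end Aux

/-- For a double cover `π : G̃ → G` of weighted graphs of genus `g`, the torus
rank `t = b₁(G̃) − b₁(G)` satisfies `t ≤ g − 1`, with equality iff every connected component of
the dilation subgraph has genus 1 and every vertex outside the dilation subgraph has genus 0. -/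
theorem torus_rank_bound (Gt G : HGraph) (gVt : Gt.V → ℕ) (gV : G.V → ℕ)
    (f : HarmonicTo Gt G) (hconnt : Gt.Connected) (hconn : G.Connected)
    (hunram : ∀ w : Gt.V, f.Ram (fun u => (gVt u : ℤ)) (fun u => (gV u : ℤ)) w = 0)
    (hdeg2 : ∀ v : G.V, ∑ w ∈ Finset.univ.filter (fun w => f.fV w = v), f.dV w = 2) :
    (((Fintype.card Gt.Edge : ℤ) - Fintype.card Gt.V + 1)
        - ((Fintype.card G.Edge : ℤ) - Fintype.card G.V + 1))
      ≤ G.genusZ (fun u => (gV u : ℤ)) - 1 ∧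
    ((((Fintype.card Gt.Edge : ℤ) - Fintype.card Gt.V + 1)
        - ((Fintype.card G.Edge : ℤ) - Fintype.card G.V + 1))
      = G.genusZ (fun u => (gV u : ℤ)) - 1 ↔
        ((∀ y : G.V, f.DilV y → f.dilCompGenus gV y = 1) ∧
         (∀ x : G.V, ¬ f.DilV x → gV x = 0))) := by
  classical
  have hVt := cardVt f hdeg2
  have hEt := cardEt f hdeg2
  have hgen : G.genusZ (fun u => (gV u : ℤ))
      = (Fintype.card G.Edge : ℤ) - (Fintype.card G.V : ℤ) + 1 + ∑ x : G.V, (gV x : ℤ) := rfl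
  have hTnn : ∀ x ∈ Finset.univ, (0:ℤ) ≤
      (if f.DilV x then 2 * (gV x : ℤ) + (f.dval x : ℤ) - 2 else 2 * (gV x : ℤ)) := by
    intro x _
    by_cases hx : f.DilV x
    · rw [if_pos hx]; exact T_nonneg f hunram hdeg2 hx
    · rw [if_neg hx]; positivity
  have hdval_filter : ∑ x ∈ Finset.univ.filter f.DilV, (f.dval x : ℤ)
      = 2 * ((Finset.univ.filter f.DilE).card : ℤ) := by
    have h0 : ∑ x ∈ Finset.univ.filter f.DilV, (f.dval x : ℤ)
        = ∑ x : G.V, (f.dval x : ℤ) := by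
      apply Finset.sum_filter_of_ne
      intro x _ hne
      by_contra hx
      exact hne (by rw [dval_eq_zero f hdeg2 hx]; norm_num)
    rw [h0]
    exact_mod_cast sum_dval f hdeg2
  have hA : ∑ x ∈ Finset.univ.filter f.DilV, (2 * (gV x : ℤ) + (f.dval x : ℤ) - 2)
      = 2 * (∑ x ∈ Finset.univ.filter f.DilV, (gV x : ℤ))
        + 2 * ((Finset.univ.filter f.DilE).card : ℤ)
        - 2 * ((Finset.univ.filter f.DilV).card : ℤ) := by
    rw [Finset.sum_sub_distrib, Finset.sum_add_distrib, ← Finset.mul_sum, Finset.sum_const,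
      hdval_filter, nsmul_eq_mul]
    ring
  have hB : ∑ x ∈ Finset.univ.filter (fun x => ¬ f.DilV x), 2 * (gV x : ℤ)
      = 2 * ∑ x ∈ Finset.univ.filter (fun x => ¬ f.DilV x), (gV x : ℤ) := by
    rw [Finset.mul_sum]
  have hC := Finset.sum_filter_add_sum_filter_not Finset.univ f.DilV (fun x => (gV x : ℤ))
  have hsum : ∑ x : G.V,
      (if f.DilV x then 2 * (gV x : ℤ) + (f.dval x : ℤ) - 2 else 2 * (gV x : ℤ))
      = 2 * (∑ x : G.V, (gV x : ℤ))
        + 2 * ((Finset.univ.filter f.DilE).card : ℤ)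
        - 2 * ((Finset.univ.filter f.DilV).card : ℤ) := by
    rw [Finset.sum_ite, hA, hB]
    linarith [hC]
  have hkey : 2 * (G.genusZ (fun u => (gV u : ℤ)) - 1)
      - 2 * ((((Fintype.card Gt.Edge : ℤ) - Fintype.card Gt.V + 1)
          - ((Fintype.card G.Edge : ℤ) - Fintype.card G.V + 1)))
      = ∑ x : G.V,
        (if f.DilV x then 2 * (gV x : ℤ) + (f.dval x : ℤ) - 2 else 2 * (gV x : ℤ)) := by
    rw [hgen, hVt, hEt, hsum]
    ring
  have hiff : (∑ x : G.V,
      (if f.DilV x then 2 * (gV x : ℤ) + (f.dval x : ℤ) - 2 else 2 * (gV x : ℤ)) = 0)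
      ↔ ((∀ y : G.V, f.DilV y → f.dilCompGenus gV y = 1) ∧
         (∀ x : G.V, ¬ f.DilV x → gV x = 0)) := by
    rw [Finset.sum_eq_zero_iff_of_nonneg hTnn]
    constructor
    · intro hz
      constructor
      · intro y hy
        have hcg := comp_genus f gV y
        have hzero : ∑ z ∈ Finset.univ.filter (f.dilReach y),
            (2 * (gV z : ℤ) + (f.dval z : ℤ) - 2) = 0 := by
          apply Finset.sum_eq_zero
          intro z hz'
          simp only [Finset.mem_filter, Finset.mem_univ, true_and] at hz'
          have hdz : f.DilV z := dilV_of_reach f hdeg2 hy hz'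
          have hterm := hz z (Finset.mem_univ z)
          rwa [if_pos hdz] at hterm
        rw [hzero] at hcg
        linarith
      · intro x hx
        have hterm := hz x (Finset.mem_univ x)
        rw [if_neg hx] at hterm
        have h0 : (gV x : ℤ) = 0 := by linarith
        exact_mod_cast h0
    · rintro ⟨ha, hb⟩ x _
      by_cases hx : f.DilV x
      · rw [if_pos hx]
        have hcg := comp_genus f gV x
        rw [ha x hx] at hcg
        have hzero : ∑ z ∈ Finset.univ.filter (f.dilReach x),
            (2 * (gV z : ℤ) + (f.dval z : ℤ) - 2) = 0 := by linarith
        have hnn : ∀ z ∈ Finset.univ.filter (f.dilReach x),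
            (0:ℤ) ≤ 2 * (gV z : ℤ) + (f.dval z : ℤ) - 2 := by
          intro z hz'
          simp only [Finset.mem_filter, Finset.mem_univ, true_and] at hz'
          exact T_nonneg f hunram hdeg2 (dilV_of_reach f hdeg2 hx hz')
        have hxmem : x ∈ Finset.univ.filter (f.dilReach x) := by
          simp only [Finset.mem_filter, Finset.mem_univ, true_and]
          exact Relation.ReflTransGen.refl
        exact (Finset.sum_eq_zero_iff_of_nonneg hnn).mp hzero x hxmem
      · rw [if_neg hx, hb x hx]
        norm_num
  have h0 : (0:ℤ) ≤ ∑ x : G.V,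
      (if f.DilV x then 2 * (gV x : ℤ) + (f.dval x : ℤ) - 2 else 2 * (gV x : ℤ)) :=
    Finset.sum_nonneg hTnn
  constructor
  · linarith [hkey, h0]
  · constructor
    · intro heq
      apply hiff.mp
      rw [← hkey, heq]
      ring
    · intro hcond
      have hz := hiff.mpr hcond
      rw [hz] at hkey
      linarith [hkey]
end

section
/- Let π : G̃ → G be a double cover of weighted graphs with g(G) = g, and let G₁, …, G_d be the connected components of the dilation subgraph G_dil (d = 0 if π is free). Then the torus rank satisfies t(G̃/G) = b₁(G̃) − b₁(G) = g − 1 − Σ_{i=1}^{d} (g(G_i) − 1) − Σ g(x), where the last sum runs over all vertices x of G not lying in G_dil; equivalently, t(G̃/G) = b₁(G) − 1 − Σ_{i=1}^{d} (b₁(G_i) − 1). -/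
open scoped Classical

namespace HarmonicTo

variable {Gt G : HGraph} (f : HarmonicTo Gt G)

/-- The vertices of the dilation subgraph. -/
def DilVtx (f : HarmonicTo Gt G) : Type := {x : G.V // f.DilV x}

instance : Finite (DilVtx f) := by
  unfold DilVtx; infer_instance

/-- The setoid on dilated vertices whose classes are the connected components of the dilation
subgraph. -/
def dilSetoid (f : HarmonicTo Gt G) : Setoid (DilVtx f) :=
  Relation.EqvGen.setoid (fun a b => f.dilAdj a.1 b.1)

/-- The set of connected components of the dilation subgraph. -/
def DilComp (f : HarmonicTo Gt G) : Type := Quotient (dilSetoid f)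

instance : Finite (DilComp f) := by
  unfold DilComp; exact Quotient.finite _

/-- The genus of a connected component of the dilation subgraph. -/
noncomputable def dilCompGenusQ (gV : G.V → ℕ) (c : DilComp f) : ℤ :=
  (Nat.card {e : G.Edge // f.DilE e ∧ ∃ a : DilVtx f,
      Quotient.mk (dilSetoid f) a = c ∧ a.1 = G.root (Quotient.out e)} : ℤ)
    - Nat.card {a : DilVtx f // Quotient.mk (dilSetoid f) a = c} + 1
    + ∑ᶠ (a : DilVtx f) (_ : Quotient.mk (dilSetoid f) a = c), (gV a.1 : ℤ)

/-- The first Betti number of a connected component of the dilation subgraph. -/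
noncomputable def dilCompB1Q (c : DilComp f) : ℤ :=
  (Nat.card {e : G.Edge // f.DilE e ∧ ∃ a : DilVtx f,
      Quotient.mk (dilSetoid f) a = c ∧ a.1 = G.root (Quotient.out e)} : ℤ)
    - Nat.card {a : DilVtx f // Quotient.mk (dilSetoid f) a = c} + 1

end HarmonicTo

/-! Local degrees are positive and add up to 2 over the fibre of every vertex of `G`, and by
harmonicity also over the fibre of every half-edge; so every vertex and edge of `G` has one or two
preimages, exactly one when it is dilated. Hence `|V(G̃)| = 2|V(G)| - |V(G_dil)|` and
`|E(G̃)| = 2|E(G)| - |E(G_dil)|`, i.e. `b₁(G̃) - b₁(G) = b₁(G) - 1 - (|E(G_dil)| - |V(G_dil)|)`.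
Summing `b₁(Gᵢ) - 1 = |E(Gᵢ)| - |V(Gᵢ)|` over the components gives back
`|E(G_dil)| - |V(G_dil)|`, because the roots of a dilated edge are dilated: by harmonicity every
preimage of the root of a half-edge is the root of a preimage of that half-edge. -/

theorem HGraph.edge_eq_edge_iff_s9 (G : HGraph) {h h' : G.H} :
    G.edge h = G.edge h' ↔ h' = h ∨ h' = G.inv h :=
  Quotient.eq

theorem card_fiber_mem_Icc_of_sum_eq_two {α β : Type*} [Fintype α] [DecidableEq β]
    (g : α → β) (d : α → ℕ) (hd : ∀ a, 0 < d a) (b : β)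
    (hsum : ∑ a ∈ Finset.univ.filter (fun a => g a = b), d a = 2) :
    Nat.card {a // g a = b} ∈ Set.Icc 1 2 := by
  rw [Nat.card_eq_fintype_card, Fintype.card_subtype]
  refine ⟨Finset.card_pos.mpr (Finset.nonempty_of_sum_ne_zero (f := d) (by omega)), ?_⟩
  simpa [hsum] using Finset.card_nsmul_le_sum (Finset.univ.filter (g · = b)) d 1 fun a _ => hd a

theorem finsum_card_fiber {α β R : Type*} [Finite α] [Finite β] [AddCommMonoidWithOne R]
    (g : α → β) : ∑ᶠ b, (Nat.card {a // g a = b} : R) = Nat.card α := by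
  have := Fintype.ofFinite β
  rw [finsum_eq_sum_of_fintype, ← Nat.cast_sum, ← Nat.card_sigma,
    Nat.card_congr (Equiv.sigmaFiberEquiv g)]

theorem card_add_card_fiber_eq_one {α β : Type*} [Fintype α] [Fintype β]
    (g : α → β) (hg : ∀ b, Nat.card {a // g a = b} ∈ Set.Icc 1 2) :
    Fintype.card α + Nat.card {b // Nat.card {a // g a = b} = 1} = 2 * Fintype.card β := by
  classical
  have hfib : ∀ b, Nat.card {a // g a = b} + (if Nat.card {a // g a = b} = 1 then 1 else 0) = 2 :=
    fun b => by obtain ⟨h1, h2⟩ := hg b; split_ifs <;> omega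
  have hα : ∑ b, Nat.card {a // g a = b} = Fintype.card α := by
    simpa [finsum_eq_sum_of_fintype] using finsum_card_fiber (R := ℕ) g
  rw [← hα, Nat.card_eq_fintype_card, Fintype.card_subtype, Finset.card_filter,
    ← Finset.sum_add_distrib, Finset.sum_congr rfl fun b _ => hfib b]
  simp [mul_comm]

theorem finsum_card_and_eq_card_of_existsUnique {α β R : Type*} [Finite α] [Finite β]
    [AddCommMonoidWithOne R] (p : α → Prop) (q : α → β → Prop) (hq : ∀ a, p a → ∃! b, q a b) :
    ∑ᶠ b, (Nat.card {a // p a ∧ q a b} : R) = Nat.card {a // p a} := by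
  choose g hg hg_unique using hq
  have hfiber : ∀ b, {a // p a ∧ q a b} ≃ {a : {a // p a} // g a.1 a.2 = b} := fun b =>
    { toFun := fun a => ⟨⟨a.1, a.2.1⟩, (hg_unique a.1 a.2.1 b a.2.2).symm⟩
      invFun := fun ⟨⟨a, ha⟩, hb⟩ => ⟨a, ha, hb ▸ hg a ha⟩
      left_inv := fun _ => rfl
      right_inv := fun _ => rfl }
  simp_rw [Nat.card_congr (hfiber _)]
  exact finsum_card_fiber _

theorem finsum_finsum_cond_eq {α β M : Type*} [Finite α] [Finite β] [AddCommMonoid M]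
    (g : α → β) (φ : α → M) :
    ∑ᶠ b, ∑ᶠ (a) (_ : g a = b), φ a = ∑ᶠ a, φ a := by
  classical
  have := Fintype.ofFinite α
  have := Fintype.ofFinite β
  have hfiber : ∀ b, ∑ᶠ (a) (_ : g a = b), φ a = ∑ a ∈ Finset.univ.filter (g · = b), φ a :=
    fun b => finsum_cond_eq_sum_of_cond_iff φ (by simp)
  simp_rw [hfiber, finsum_eq_sum_of_fintype]
  exact Finset.sum_fiberwise _ g φ

theorem finsum_cond_add_finsum_cond_not {α M : Type*} [Fintype α] [AddCommMonoid M]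
    (p : α → Prop) (φ : α → M) :
    ∑ᶠ (a) (_ : p a), φ a + ∑ᶠ (a) (_ : ¬ p a), φ a = ∑ a, φ a := by
  classical
  rw [finsum_cond_eq_sum_of_cond_iff φ (t := Finset.univ.filter p) (by simp),
    finsum_cond_eq_sum_of_cond_iff φ (t := Finset.univ.filter (¬ p ·)) (by simp),
    Finset.sum_filter_add_sum_filter_not]

namespace HarmonicTo

variable {Gt G : HGraph} (f : HarmonicTo Gt G)

def HasDegreeTwo : Prop :=
  ∀ v : G.V, ∑ w ∈ Finset.univ.filter (fun w => f.fV w = v), f.dV w = 2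

theorem exists_root_eq_fH_eq {w : Gt.V} {h : G.H} (hw : G.root h = f.fV w) :
    ∃ x, Gt.root x = w ∧ f.fH x = h := by
  obtain ⟨x, hx, -⟩ := Finset.exists_ne_zero_of_sum_ne_zero (f.harm w h hw ▸ (f.dV_pos w).ne')
  exact ⟨x, by simpa using hx⟩

theorem card_fiber_fV_root_le (h : G.H) :
    Nat.card {w // f.fV w = G.root h} ≤ Nat.card {x // f.fH x = h} := by
  refine Nat.card_le_card_of_surjective
    (fun x => (⟨Gt.root x.1, by rw [← f.root_comm, x.2]⟩ : {w // f.fV w = G.root h})) ?_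
  rintro ⟨w, hw⟩
  obtain ⟨x, rfl, hx⟩ := f.exists_root_eq_fH_eq hw.symm
  exact ⟨⟨x, hx⟩, rfl⟩

theorem card_fiber_fE_edge (h : G.H) :
    Nat.card {a // f.fE a = G.edge h} = Nat.card {x // f.fH x = h} := by
  refine (Nat.card_eq_of_bijective (fun x => ⟨Gt.edge x.1, congrArg G.edge x.2⟩) ⟨?_, ?_⟩).symm
  · rintro ⟨x, hx⟩ ⟨y, hy⟩ hxy
    rcases (Gt.edge_eq_edge_iff_s9).mp (congrArg Subtype.val hxy) with rfl | rfl
    · rfl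
    · rw [f.inv_comm, hx] at hy
      exact absurd hy (G.inv_ne h)
  · rintro ⟨a, ha⟩
    obtain ⟨y, rfl⟩ := Quotient.exists_rep a
    rcases (G.edge_eq_edge_iff_s9).mp ha.symm with hy | hy
    · exact ⟨⟨y, hy⟩, rfl⟩
    · exact ⟨⟨Gt.inv y, by rw [f.inv_comm, hy, G.inv_inv]⟩, Subtype.ext (Gt.edge_inv y)⟩

theorem sum_dH_fiber_fH (hf : f.HasDegreeTwo) (h : G.H) :
    ∑ x ∈ Finset.univ.filter (fun x => f.fH x = h), f.dH x = 2 := by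
  have hroot : ∀ x ∈ Finset.univ.filter (fun x => f.fH x = h),
      Gt.root x ∈ Finset.univ.filter (fun w => f.fV w = G.root h) := by
    intro x hx
    simp only [Finset.mem_filter, Finset.mem_univ, true_and] at hx ⊢
    rw [← hx, f.root_comm]
  rw [← Finset.sum_fiberwise_of_maps_to hroot, ← hf (G.root h)]
  refine Finset.sum_congr rfl fun w hw => ?_
  rw [Finset.filter_filter, f.harm w h (Finset.mem_filter.mp hw).2.symm]
  simp_rw [and_comm]

theorem card_fiber_fV_mem_Icc (hf : f.HasDegreeTwo) (v : G.V) :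
    Nat.card {w // f.fV w = v} ∈ Set.Icc 1 2 :=
  card_fiber_mem_Icc_of_sum_eq_two f.fV f.dV f.dV_pos v (hf v)

theorem card_fiber_fE_mem_Icc (hf : f.HasDegreeTwo) (e : G.Edge) :
    Nat.card {a // f.fE a = e} ∈ Set.Icc 1 2 := by
  obtain ⟨h, rfl⟩ := Quotient.exists_rep e
  rw [show Quotient.mk _ h = G.edge h from rfl, card_fiber_fE_edge]
  exact card_fiber_mem_Icc_of_sum_eq_two f.fH f.dH f.dH_pos h (f.sum_dH_fiber_fH hf h)

theorem dilV_root_of_dilE (hf : f.HasDegreeTwo) {h : G.H} (hd : f.DilE (G.edge h)) :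
    f.DilV (G.root h) := by
  have hle := f.card_fiber_fV_root_le h
  rw [← card_fiber_fE_edge, show Nat.card {a // f.fE a = G.edge h} = 1 from hd] at hle
  exact le_antisymm hle (f.card_fiber_fV_mem_Icc hf _).1

theorem card_add_card_dilV (hf : f.HasDegreeTwo) :
    Fintype.card Gt.V + Nat.card (DilVtx f) = 2 * Fintype.card G.V :=
  card_add_card_fiber_eq_one f.fV (f.card_fiber_fV_mem_Icc hf)

theorem card_add_card_dilE (hf : f.HasDegreeTwo) :
    Fintype.card Gt.Edge + Nat.card {e // f.DilE e} = 2 * Fintype.card G.Edge :=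
  card_add_card_fiber_eq_one f.fE (f.card_fiber_fE_mem_Icc hf)

theorem finsum_dilCompB1Q_sub_one (hf : f.HasDegreeTwo) :
    ∑ᶠ c, (f.dilCompB1Q c - 1) = (Nat.card {e // f.DilE e} : ℤ) - Nat.card (DilVtx f) := by
  have hedges : ∀ e, f.DilE e → ∃! c, ∃ a : DilVtx f,
      Quotient.mk (dilSetoid f) a = c ∧ a.1 = G.root (Quotient.out e) := fun e he =>
    ⟨_, ⟨⟨_, f.dilV_root_of_dilE hf (by convert he; exact Quotient.out_eq e)⟩, rfl, rfl⟩,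
      by rintro _ ⟨a, rfl, hae⟩; exact congrArg _ (Subtype.ext hae)⟩
  simp only [dilCompB1Q, add_sub_cancel_right]
  rw [finsum_sub_distrib (Set.toFinite _) (Set.toFinite _)]
  exact congrArg₂ (· - ·) (finsum_card_and_eq_card_of_existsUnique _ _ hedges)
    (finsum_card_fiber (Quotient.mk (dilSetoid f)))

theorem finsum_dilCompGenusQ_sub_one (gV : G.V → ℕ) :
    ∑ᶠ c, (f.dilCompGenusQ gV c - 1)
      = ∑ᶠ c, (f.dilCompB1Q c - 1) + ∑ᶠ (x) (_ : f.DilV x), (gV x : ℤ) := by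
  have hcomp : ∀ c, f.dilCompGenusQ gV c - 1
      = (f.dilCompB1Q c - 1) + ∑ᶠ (a) (_ : Quotient.mk (dilSetoid f) a = c), (gV a.1 : ℤ) :=
    fun c => by unfold dilCompGenusQ dilCompB1Q; ring
  simp_rw [hcomp]
  rw [finsum_add_distrib (Set.toFinite _) (Set.toFinite _)]
  exact congrArg _ ((finsum_finsum_cond_eq (Quotient.mk (dilSetoid f)) _).trans
    (finsum_subtype_eq_finsum_cond (f := fun x => (gV x : ℤ)) f.DilV))

end HarmonicTo

theorem torus_rank_formula_general (Gt G : HGraph) (gV : G.V → ℕ)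
    (f : HarmonicTo Gt G)
    (hdeg2 : ∀ v : G.V, ∑ w ∈ Finset.univ.filter (fun w => f.fV w = v), f.dV w = 2) :
    (((Fintype.card Gt.Edge : ℤ) - Fintype.card Gt.V + 1)
        - ((Fintype.card G.Edge : ℤ) - Fintype.card G.V + 1))
      = G.genusZ (fun u => (gV u : ℤ)) - 1
        - (∑ᶠ c : HarmonicTo.DilComp f, (f.dilCompGenusQ gV c - 1))
        - (∑ᶠ (x : G.V) (_ : ¬ f.DilV x), (gV x : ℤ)) ∧
    (((Fintype.card Gt.Edge : ℤ) - Fintype.card Gt.V + 1)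
        - ((Fintype.card G.Edge : ℤ) - Fintype.card G.V + 1))
      = ((Fintype.card G.Edge : ℤ) - Fintype.card G.V + 1) - 1
        - ∑ᶠ c : HarmonicTo.DilComp f, (f.dilCompB1Q c - 1) := by
  have hV := f.card_add_card_dilV hdeg2
  have hE := f.card_add_card_dilE hdeg2
  have hb1 := f.finsum_dilCompB1Q_sub_one hdeg2
  have hsplit := finsum_cond_add_finsum_cond_not f.DilV fun x => (gV x : ℤ)
  rw [f.finsum_dilCompGenusQ_sub_one gV, hb1, HGraph.genusZ, ← hsplit]
  zify at hV hE
  constructor <;> linarith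

/-- For a double cover `π : G̃ → G` of weighted graphs of genus `g`, with
`G₁, …, G_d` the connected components of the dilation subgraph, the torus rank satisfies
`t(G̃/G) = b₁(G̃) − b₁(G) = g − 1 − Σᵢ(g(Gᵢ) − 1) − Σ_{x ∉ G_dil} g(x)`; equivalently
`t(G̃/G) = b₁(G) − 1 − Σᵢ(b₁(Gᵢ) − 1)`. -/
theorem torus_rank_formula (Gt G : HGraph) (gVt : Gt.V → ℕ) (gV : G.V → ℕ)
    (f : HarmonicTo Gt G) (hconnt : Gt.Connected) (hconn : G.Connected)
    (hunram : ∀ w : Gt.V, f.Ram (fun u => (gVt u : ℤ)) (fun u => (gV u : ℤ)) w = 0)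
    (hdeg2 : ∀ v : G.V, ∑ w ∈ Finset.univ.filter (fun w => f.fV w = v), f.dV w = 2) :
    (((Fintype.card Gt.Edge : ℤ) - Fintype.card Gt.V + 1)
        - ((Fintype.card G.Edge : ℤ) - Fintype.card G.V + 1))
      = G.genusZ (fun u => (gV u : ℤ)) - 1
        - (∑ᶠ c : HarmonicTo.DilComp f, (f.dilCompGenusQ gV c - 1))
        - (∑ᶠ (x : G.V) (_ : ¬ f.DilV x), (gV x : ℤ)) ∧
    (((Fintype.card Gt.Edge : ℤ) - Fintype.card Gt.V + 1)
        - ((Fintype.card G.Edge : ℤ) - Fintype.card G.V + 1))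
      = ((Fintype.card G.Edge : ℤ) - Fintype.card G.V + 1) - 1
        - ∑ᶠ c : HarmonicTo.DilComp f, (f.dilCompB1Q c - 1) :=
  torus_rank_formula_general Gt G gV f hdeg2
end

section
/- Let G be a connected graph with a sign function σ : E(G) → ℤ/2ℤ defining a connected free double cover, and let {e₁, …, e_n} ⊆ E(G) be an FS_n-set: deleting all of e₁, …, e_n leaves exactly two connected components, both unbalanced, while deleting any proper subset of {e₁, …, e_n} leaves G connected. Then n ≤ b₁(G) − 1, where b₁(G) = |E(G)| − |V(G)| + 1. -/
open scoped Classical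

namespace HGraph

/-- A cycle contained in a set of edges `S`: a closed walk with pairwise distinct edges and
pairwise distinct vertices, all of whose edges belong to `S`. -/
def IsCycleIn (G : HGraph) (S : Set G.Edge) {n : ℕ} (c : Fin (n + 1) → G.H) : Prop :=
  (∀ i, G.edge (c i) ∈ S) ∧
  (∀ i, G.root (G.inv (c i)) = G.root (c (i + 1))) ∧
  (Function.Injective fun i => G.edge (c i)) ∧
  (Function.Injective fun i => G.root (c i))

/-- A signed graph is unbalanced if it contains a cycle of odd total sign. -/
def Unbal (G : HGraph) (σ : G.Edge → ZMod 2) : Prop :=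
  ∃ (n : ℕ) (c : Fin (n + 1) → G.H),
    G.IsCycleIn Set.univ c ∧ (∑ i, σ (G.edge (c i))) = 1

/-- Every connected component of the graph obtained from `G` by deleting the edges in `F` is
unbalanced: every vertex can reach, through edges not in `F`, the base point of a cycle of odd
total sign avoiding `F`. -/
def DelUnbal (G : HGraph) (σ : G.Edge → ZMod 2) (F : Finset G.Edge) : Prop :=
  ∀ v : G.V, ∃ (n : ℕ) (c : Fin (n + 1) → G.H),
    G.IsCycleIn {e | e ∉ F} c ∧ (∑ i, σ (G.edge (c i))) = 1 ∧
    Relation.ReflTransGen (G.adjOn Fᶜ) v (G.root (c 0))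

/-- A Prym basis: a set `B` of `|V(G)|` edges such that every connected component of the
spanning subgraph `(V(G), B)` is unbalanced. -/
def PrymBasis (G : HGraph) (σ : G.Edge → ZMod 2) (B : Finset G.Edge) : Prop :=
  B.card = Fintype.card G.V ∧
  ∀ v : G.V, ∃ (n : ℕ) (c : Fin (n + 1) → G.H),
    G.IsCycleIn {e | e ∈ B} c ∧ (∑ i, σ (G.edge (c i))) = 1 ∧
    Relation.ReflTransGen (G.adjOn B) v (G.root (c 0))

/-- The free double cover associated to a signed graph. -/
def cover (G : HGraph) (σ : G.Edge → ZMod 2) : HGraph where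
  V := G.V × ZMod 2
  H := G.H × ZMod 2
  root p := (G.root p.1, p.2)
  inv p := (G.inv p.1, p.2 + σ (G.edge p.1))
  inv_inv := by
    intro p
    have h2 : ∀ a : ZMod 2, a + a = 0 := by decide
    ext
    · exact G.inv_inv p.1
    · show p.2 + σ (G.edge p.1) + σ (G.edge (G.inv p.1)) = p.2
      rw [G.edge_inv, add_assoc, h2, add_zero]
  inv_ne := by
    intro p hp
    exact G.inv_ne p.1 (congrArg Prod.fst hp)

end HGraph

namespace HGraph

/-- An `FSₙ`-set of a connected signed graph: a set `S` of `n` edges whose deletion leaves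
exactly two connected components, both unbalanced, while the deletion of any proper subset of
`S` leaves the graph connected. -/
def IsFSSet (G : HGraph) (σ : G.Edge → ZMod 2) (S : Finset G.Edge) : Prop :=
  G.ncomp Sᶜ = 2 ∧ G.DelUnbal σ S ∧ ∀ S' ⊆ S, S' ≠ S → G.ConnectedOn S'ᶜ

end HGraph

/-!
Deleting the `n` edges of `S` leaves two components, each containing a cycle (of odd sign). The
two cycles share no edge, and deleting one edge of each does not disconnect anything, so the
resulting spanning subgraph still has two components and `|E| - n - 2` edges. Since deleting an edge raises the number of
components by at most one, a spanning subgraph with `c` components and `m` edges satisfies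
`|V| ≤ c + m`; hence `|V| ≤ 2 + (|E| - n - 2)`.
-/

namespace Relation

variable {α : Type*}

theorem exists_not_eqvGen_of_one_lt_card_quotient {r : α → α → Prop} [Finite α]
    (h : 1 < Nat.card (Quotient (EqvGen.setoid r))) : ∃ u v, ¬ EqvGen r u v := by
  obtain ⟨x, y, hxy⟩ := (Finite.one_lt_card_iff_nontrivial.1 h).exists_pair_ne
  induction x, y using Quotient.inductionOn₂ with
  | h u v => exact ⟨u, v, fun huv => hxy (Quotient.sound huv)⟩

theorem card_quotient_eqvGen_le_of_le {r s : α → α → Prop} [Finite α]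
    (h : ∀ u v, r u v → EqvGen s u v) :
    Nat.card (Quotient (EqvGen.setoid s)) ≤ Nat.card (Quotient (EqvGen.setoid r)) :=
  Nat.card_le_card_of_surjective (Setoid.map_of_le (Setoid.eqvGen_le h))
    (Quotient.ind fun u => ⟨⟦u⟧, rfl⟩)

theorem card_quotient_eqvGen_le_add_one (r : α → α → Prop) (a b : α) [Finite α] :
    Nat.card (Quotient (EqvGen.setoid r)) ≤
      Nat.card (Quotient (EqvGen.setoid fun u v => r u v ∨ u = a ∧ v = b)) + 1 := by
  set s : α → α → Prop := fun u v => r u v ∨ u = a ∧ v = b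
  let q : α → Quotient (EqvGen.setoid r) := Quotient.mk _
  have merge : ∀ u v, EqvGen s u v →
      q u = q v ∨ ((q u = q a ∨ q u = q b) ∧ (q v = q a ∨ q v = q b)) := by
    intro u v huv
    induction huv with
    | rel u v huv =>
      rcases huv with huv | ⟨rfl, rfl⟩
      · exact Or.inl (Quotient.sound (EqvGen.rel _ _ huv))
      · exact Or.inr ⟨Or.inl rfl, Or.inr rfl⟩
    | refl => exact Or.inl rfl
    | symm _ _ _ ih => tauto
    | trans _ _ _ _ _ ih₁ ih₂ => grind
  let f : Quotient (EqvGen.setoid r) → Option (Quotient (EqvGen.setoid s)) := fun x =>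
    if x = q a then none else some (Setoid.map_of_le (Setoid.eqvGen_le fun u v huv =>
      EqvGen.rel _ _ (Or.inl huv)) x)
  have hf : Function.Injective f := by
    intro x y hxy
    induction x, y using Quotient.inductionOn₂ with
    | h u v =>
      change f (q u) = f (q v) at hxy
      by_cases hu : q u = q a <;> by_cases hv : q v = q a
      · exact hu.trans hv.symm
      · simp [f, hu, hv] at hxy
      · simp [f, hu, hv] at hxy
      simp only [f, hu, hv, if_false, Option.some.injEq] at hxy
      rcases merge u v (Quotient.exact hxy) with huv | ⟨hu' | hu', hv' | hv'⟩
      · exact huv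
      · exact absurd hu' hu
      · exact absurd hu' hu
      · exact absurd hv' hv
      · exact hu'.trans hv'.symm
  calc Nat.card (Quotient (EqvGen.setoid r))
      ≤ Nat.card (Option (Quotient (EqvGen.setoid s))) := Nat.card_le_card_of_injective f hf
    _ = _ := Finite.card_option

end Relation

namespace HGraph

open Relation

variable {G : HGraph}

lemma adjOn_mono {T T' : Finset G.Edge} (hT : T ⊆ T') {u v : G.V} (h : G.adjOn T u v) :
    G.adjOn T' u v :=
  let ⟨x, hx, hu, hv⟩ := h
  ⟨x, hT hx, hu, hv⟩

lemma adjOn_erase_or {T : Finset G.Edge} {u v : G.V} (h₀ : G.H) (huv : G.adjOn T u v) :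
    G.adjOn (T.erase (G.edge h₀)) u v ∨
      (u = G.root h₀ ∧ v = G.root (G.inv h₀)) ∨ (u = G.root (G.inv h₀) ∧ v = G.root h₀) := by
  obtain ⟨h, hT, rfl, rfl⟩ := huv
  by_cases he : G.edge h = G.edge h₀
  · rcases Quotient.exact he with rfl | rfl
    · exact Or.inr (Or.inl ⟨rfl, rfl⟩)
    · exact Or.inr (Or.inr ⟨by rw [G.inv_inv], rfl⟩)
  · exact Or.inl ⟨h, Finset.mem_erase.2 ⟨he, hT⟩, rfl, rfl⟩

lemma eqvGen_root_of_edge_eq {T : Finset G.Edge} {h h' : G.H} (hT : G.edge h ∈ T)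
    (he : G.edge h' = G.edge h) : EqvGen (G.adjOn T) (G.root h') (G.root h) := by
  rcases Quotient.exact he with rfl | rfl
  · exact EqvGen.refl _
  · exact EqvGen.rel _ _ ⟨h', he ▸ hT, rfl, rfl⟩

lemma ncomp_erase_le_add_one (T : Finset G.Edge) (e : G.Edge) :
    G.ncomp (T.erase e) ≤ G.ncomp T + 1 := by
  obtain ⟨h₀, rfl⟩ := Quotient.mk_surjective e
  refine (card_quotient_eqvGen_le_add_one _ (G.root h₀) (G.root (G.inv h₀))).trans
    (Nat.add_le_add_right (card_quotient_eqvGen_le_of_le fun u v huv => ?_) 1)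
  rcases adjOn_erase_or h₀ huv with huv | ⟨rfl, rfl⟩ | ⟨rfl, rfl⟩
  · exact EqvGen.rel _ _ (Or.inl huv)
  · exact EqvGen.rel _ _ (Or.inr ⟨rfl, rfl⟩)
  · exact EqvGen.symm _ _ (EqvGen.rel _ _ (Or.inr ⟨rfl, rfl⟩))

lemma card_le_ncomp_empty : Fintype.card G.V ≤ G.ncomp ∅ := by
  rw [← Nat.card_eq_fintype_card]
  refine Nat.card_le_card_of_injective (Quotient.mk _) fun u v huv => ?_
  refine EqvGen.eqvGen_le (r' := Eq) ?_ u v (Quotient.exact huv)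
  rintro _ _ ⟨_, hmem, -⟩
  exact absurd hmem (Finset.notMem_empty _)

lemma card_le_ncomp_add_card (T : Finset G.Edge) : Fintype.card G.V ≤ G.ncomp T + T.card := by
  induction T using Finset.induction_on with
  | empty => simpa using card_le_ncomp_empty
  | insert e T he ih =>
    have := ncomp_erase_le_add_one (insert e T) e
    rw [Finset.erase_insert he] at this
    rw [Finset.card_insert_of_notMem he]
    omega

namespace IsCycleIn

variable {T : Finset G.Edge} {n : ℕ} {c : Fin (n + 1) → G.H}

lemma eqvGen_erase (hc : G.IsCycleIn T c) (i : Fin (n + 1)) :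
    EqvGen (G.adjOn (T.erase (G.edge (c 0)))) (G.root (c i)) (G.root (c 0)) := by
  obtain ⟨hmem, hnext, hinj, -⟩ := hc
  set R := G.adjOn (T.erase (G.edge (c 0)))
  have step : ∀ i, EqvGen R (G.root (c (i + 1))) (G.root (c 0)) →
      EqvGen R (G.root (c i)) (G.root (c 0)) := by
    intro i hi
    by_cases hi0 : i = 0
    · exact hi0 ▸ EqvGen.refl _
    · refine EqvGen.trans _ _ _ (EqvGen.rel _ _ ⟨c i, ?_, rfl, hnext i⟩) hi
      exact Finset.mem_erase.2 ⟨fun he => hi0 (hinj he), hmem i⟩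
  induction i using Fin.reverseInduction with
  | last => exact step _ (by rw [Fin.last_add_one]; exact EqvGen.refl _)
  | cast i ih => exact step _ (by rwa [Fin.coeSucc_eq_succ])

lemma eqvGen (hc : G.IsCycleIn T c) (i : Fin (n + 1)) :
    EqvGen (G.adjOn T) (G.root (c i)) (G.root (c 0)) :=
  EqvGen.mono (fun _ _ => adjOn_mono (Finset.erase_subset _ _)) _ _ (hc.eqvGen_erase i)

lemma ncomp_erase_le (hc : G.IsCycleIn T c) :
    G.ncomp (T.erase (G.edge (c 0))) ≤ G.ncomp T := by
  refine card_quotient_eqvGen_le_of_le fun u v huv => ?_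
  rcases adjOn_erase_or (c 0) huv with huv | ⟨rfl, rfl⟩ | ⟨rfl, rfl⟩
  · exact EqvGen.rel _ _ huv
  · rw [hc.2.1 0]
    exact EqvGen.symm _ _ (hc.eqvGen_erase _)
  · rw [hc.2.1 0]
    exact hc.eqvGen_erase _

end IsCycleIn

lemma card_add_two_le_of_isCycleIn {T : Finset G.Edge} {m k : ℕ} {c : Fin (m + 1) → G.H}
    {d : Fin (k + 1) → G.H} (hc : G.IsCycleIn T c) (hd : G.IsCycleIn T d)
    (hcd : ¬ EqvGen (G.adjOn T) (G.root (c 0)) (G.root (d 0))) :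
    Fintype.card G.V + 2 ≤ G.ncomp T + T.card := by
  have hd' : G.IsCycleIn (T.erase (G.edge (c 0))) d := by
    refine ⟨fun i => Finset.mem_erase.2 ⟨fun he => hcd ?_, hd.1 i⟩, hd.2⟩
    exact (EqvGen.symm _ _ (eqvGen_root_of_edge_eq (hc.1 0) he)).trans _ _ _ (hd.eqvGen i)
  have hcomp₁ := hc.ncomp_erase_le
  have hcomp₂ := hd'.ncomp_erase_le
  have hcount := card_le_ncomp_add_card ((T.erase (G.edge (c 0))).erase (G.edge (d 0)))
  have hcard₁ := Finset.card_erase_add_one (hc.1 0)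
  have hcard₂ := Finset.card_erase_add_one (hd'.1 0)
  omega

end HGraph

theorem FS_set_size_bound_general (G : HGraph) (σ : G.Edge → ZMod 2)
    (S : Finset G.Edge) (n : ℕ) (hcard : S.card = n) (hFS : G.IsFSSet σ S) :
    (n : ℤ) ≤ ((Fintype.card G.Edge : ℤ) - Fintype.card G.V + 1) - 1 := by
  obtain ⟨htwo, hunbal, -⟩ := hFS
  obtain ⟨v, w, hvw⟩ := Relation.exists_not_eqvGen_of_one_lt_card_quotient
    (show 1 < G.ncomp Sᶜ by omega)
  obtain ⟨_, c, hc, -, hvc⟩ := hunbal v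
  obtain ⟨_, d, hd, -, hwd⟩ := hunbal w
  replace hc : G.IsCycleIn ↑Sᶜ c := by rwa [Finset.coe_compl]
  replace hd : G.IsCycleIn ↑Sᶜ d := by rwa [Finset.coe_compl]
  have hcd : ¬ Relation.EqvGen (G.adjOn Sᶜ) (G.root (c 0)) (G.root (d 0)) := fun hcd =>
    hvw (((Relation.EqvGen.reflTransGen_le_eqvGen _ _ _ hvc).trans _ _ _ hcd).trans _ _ _
      ((Relation.EqvGen.reflTransGen_le_eqvGen _ _ _ hwd).symm))
  have hcount := HGraph.card_add_two_le_of_isCycleIn hc hd hcd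
  rw [htwo, Finset.card_compl, hcard] at hcount
  have hn : n ≤ Fintype.card G.Edge := hcard ▸ Finset.card_le_univ S
  omega

/-- **Statement 18.** If `{e₁, …, eₙ}` is an `FSₙ`-set of a connected signed graph `(G, σ)`
whose associated free double cover is connected, then `n ≤ b₁(G) − 1`, where
`b₁(G) = |E(G)| − |V(G)| + 1`. -/
theorem FS_set_size_bound (G : HGraph) (σ : G.Edge → ZMod 2)
    (hconn : G.Connected) (hcov : (G.cover σ).Connected)
    (S : Finset G.Edge) (n : ℕ) (hcard : S.card = n) (hFS : G.IsFSSet σ S) :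
    (n : ℤ) ≤ ((Fintype.card G.Edge : ℤ) - Fintype.card G.V + 1) - 1 :=
  FS_set_size_bound_general G σ S n hcard hFS
end
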